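/- arXiv:2502.18663 — 7 statements merged into one kernel-verified Lean document; each statement's English description precedes it below -/
import Mathlib

section
/- Let G be a finite connected simple graph with at least two vertices and let d : V(G) → ℤ be any function. Set m = min_{s} d(s) and M = {s ∈ V(G) : d(s) = m}. Then d satisfies the Bellman equation d(s) = 1 + min_{t ∈ N(s)} d(t) for every vertex s ∉ M if and only if d(s) = m + dist(s, M) for every vertex s, where dist(s, M) = min_{v ∈ M} dist(s, v). In particular, every solution of the Bellman equation without boundary condition is, up to an additive constant, the distance function to the set of its minimizers. -/
/-- Let `G` be a finite connected simple graph with at least two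
vertices and `d : V → ℤ` any function. Set `m = min_s d s` and
`M = {s | d s = m}`. Then `d` satisfies the Bellman equation
`d s = 1 + min_{t ∈ N(s)} d t` for every `s ∉ M` if and only if
`d s = m + dist(s, M)` for every vertex `s`, where
`dist(s, M) = min_{v ∈ M} dist(s, v)`. -/
theorem bellman_no_boundary_iff_dist_to_minimizers {V : Type*} [Fintype V]
    (G : SimpleGraph V) (hconn : G.Connected) (hcard : 1 < Fintype.card V)
    (d : V → ℤ) (m : ℤ) (hm : m = sInf (Set.range d))
    (M : Set V) (hM : M = {s : V | d s = m}) :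
    (∀ s : V, s ∉ M → d s = 1 + sInf (d '' G.neighborSet s)) ↔
      (∀ s : V, d s = m + (sInf ((fun v => G.dist s v) '' M) : ℕ)) := by
  have hVne : Nonempty V := Fintype.card_pos_iff.mp (by omega)
  have hfin : (Set.range d).Finite := Set.finite_range d
  have hbdd : BddBelow (Set.range d) := hfin.bddBelow
  have hle : ∀ s, m ≤ d s := fun s => hm ▸ csInf_le hbdd (Set.mem_range_self s)
  have hMval : ∀ s, s ∈ M ↔ d s = m := fun s => by rw [hM]; rfl
  have hMne : M.Nonempty := by
    have := (Set.range_nonempty d).csInf_mem hfin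
    obtain ⟨s₀, hs₀⟩ := this
    exact ⟨s₀, (hMval s₀).mpr (hs₀.trans hm.symm)⟩
  set D : V → ℕ := fun s => sInf ((fun v => G.dist s v) '' M) with hD
  have himg_ne : ∀ s, ((fun v => G.dist s v) '' M).Nonempty := fun s => hMne.image _
  have hDmem : ∀ s, ∃ v ∈ M, G.dist s v = D s := by
    intro s
    have := Nat.sInf_mem (himg_ne s)
    obtain ⟨v, hv, hdv⟩ := this
    exact ⟨v, hv, hdv⟩
  have hDle : ∀ s v, v ∈ M → D s ≤ G.dist s v := fun s v hv =>
    Nat.sInf_le ⟨v, hv, rfl⟩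
  have hD0 : ∀ s, D s = 0 ↔ s ∈ M := by
    intro s
    constructor
    · intro h0
      obtain ⟨v, hv, hdv⟩ := hDmem s
      rw [h0] at hdv
      have : s = v := (hconn.dist_eq_zero_iff).mp hdv
      rwa [this]
    · intro hs
      have h1 := hDle s s hs
      rw [SimpleGraph.dist_self] at h1
      omega
  have hDadj : ∀ s t, G.Adj s t → D s ≤ D t + 1 := by
    intro s t hadj
    obtain ⟨v, hv, hdv⟩ := hDmem t
    have h1 : G.dist s t ≤ 1 := by
      have := SimpleGraph.dist_le hadj.toWalk
      simpa using this
    calc D s ≤ G.dist s v := hDle s v hv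
      _ ≤ G.dist s t + G.dist t v := hconn.dist_triangle
      _ ≤ 1 + D t := by rw [hdv]; omega
      _ = D t + 1 := by omega
  -- a step toward M
  have hstep : ∀ s, s ∉ M → ∃ t, G.Adj s t ∧ D t + 1 ≤ D s := by
    intro s hs
    obtain ⟨v, hv, hdv⟩ := hDmem s
    have hDs : D s ≠ 0 := fun h => hs ((hD0 s).mp h)
    have hsv : s ≠ v := by
      rintro rfl; exact hs hv
    obtain ⟨p, hp⟩ := hconn.exists_walk_length_eq_dist s v
    cases p with
    | nil => exact absurd rfl hsv
    | @cons _ t _ hadj q =>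
      refine ⟨t, hadj, ?_⟩
      have hq : D t ≤ q.length := le_trans (hDle t v hv) (SimpleGraph.dist_le q)
      simp only [SimpleGraph.Walk.length_cons] at hp
      omega
  -- neighbor sets are nonempty
  have hNne : ∀ s, (G.neighborSet s).Nonempty := by
    intro s
    obtain ⟨w, hw⟩ := Fintype.exists_ne_of_one_lt_card hcard s
    obtain ⟨p⟩ := hconn s w
    cases p with
    | nil => exact absurd rfl hw
    | @cons _ t _ hadj q => exact ⟨t, hadj⟩
  have hNbdd : ∀ s, BddBelow (d '' G.neighborSet s) :=
    fun s => ((Set.toFinite _).image d).bddBelow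
  have hgoal : (∀ s : V, d s = m + (sInf ((fun v => G.dist s v) '' M) : ℕ)) ↔
      (∀ s : V, d s = m + (D s : ℤ)) := Iff.rfl
  rw [hgoal]
  constructor
  · intro hb
    have A : ∀ n : ℕ, ∀ s, D s ≤ n → d s ≤ m + D s := by
      intro n
      induction n with
      | zero =>
        intro s hs
        have hsM : s ∈ M := (hD0 s).mp (Nat.le_zero.mp hs)
        have : d s = m := (hMval s).mp hsM
        omega
      | succ n ih =>
        intro s hs
        by_cases hsM : s ∈ M
        · have : d s = m := (hMval s).mp hsM
          omega
        · obtain ⟨t, hadj, hts⟩ := hstep s hsM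
          have hDt : D t ≤ n := by
            have hDs : D s ≠ 0 := fun h => hsM ((hD0 s).mp h)
            omega
          have h1 := ih t hDt
          have h2 : sInf (d '' G.neighborSet s) ≤ d t :=
            csInf_le (hNbdd s) ⟨t, hadj, rfl⟩
          have h3 := hb s hsM
          have h4 : (D t : ℤ) + 1 ≤ (D s : ℤ) := by exact_mod_cast hts
          omega
    have B : ∀ k : ℕ, ∀ s, d s ≤ m + k → m + (D s : ℤ) ≤ d s := by
      intro k
      induction k with
      | zero =>
        intro s hs
        have : d s = m := le_antisymm (by omega) (hle s)
        have hsM : s ∈ M := (hMval s).mpr this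
        have : D s = 0 := (hD0 s).mpr hsM
        omega
      | succ k ih =>
        intro s hs
        by_cases hsM : s ∈ M
        · have : D s = 0 := (hD0 s).mpr hsM
          have := hle s
          omega
        · have h3 := hb s hsM
          have hmem : sInf (d '' G.neighborSet s) ∈ d '' G.neighborSet s :=
            ((hNne s).image d).csInf_mem ((Set.toFinite _).image d)
          obtain ⟨t, htN, hdt⟩ := hmem
          have ht' : d t ≤ m + k := by omega
          have h1 := ih t ht'
          have h2 : D s ≤ D t + 1 := hDadj s t htN
          have h4 : (D s : ℤ) ≤ (D t : ℤ) + 1 := by exact_mod_cast h2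
          omega
    intro s
    have a := A (D s) s le_rfl
    have b : m + (D s : ℤ) ≤ d s := by
      apply B (d s - m).toNat s
      have := hle s
      omega
    omega
  · intro h s hsM
    have hDs : D s ≠ 0 := fun h0 => hsM ((hD0 s).mp h0)
    obtain ⟨t0, hadj0, ht0⟩ := hstep s hsM
    have hlow : ∀ x ∈ d '' G.neighborSet s, m + (D s : ℤ) - 1 ≤ x := by
      rintro x ⟨t, htN, rfl⟩
      have h2 : D s ≤ D t + 1 := hDadj s t htN
      have h4 : (D s : ℤ) ≤ (D t : ℤ) + 1 := by exact_mod_cast h2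
      have := h t
      omega
    have hup : sInf (d '' G.neighborSet s) ≤ m + (D s : ℤ) - 1 := by
      have hmem : d t0 ∈ d '' G.neighborSet s := ⟨t0, hadj0, rfl⟩
      have h4 : (D t0 : ℤ) + 1 ≤ (D s : ℤ) := by exact_mod_cast ht0
      have := h t0
      calc sInf (d '' G.neighborSet s) ≤ d t0 := csInf_le (hNbdd s) hmem
        _ ≤ m + (D s : ℤ) - 1 := by omega
    have heq : sInf (d '' G.neighborSet s) = m + (D s : ℤ) - 1 :=
      le_antisymm hup (le_csInf ((hNne s).image d) hlow)
    have := h s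
    omega
end

section
/- Let n > 2, m = ⌊n/2⌋, and δ = 1 if n is even, δ = 0 if n is odd. Then the permutation ℓ_n admits the explicit factorization ℓ_n = (∏_{i=1}^{m−δ} (X · L^{(−1)^{i−1}})^i) · (∏_{i=m−1}^{1} (L^{(−1)^{i−δ}} · X)^i) · R^m into LRX generators (the first product over i = 1, 2, …, m−δ, the second over i = m−1, m−2, …, 1, with L^{−1} = R, and with a fixed consistent composition convention for products of permutations). The total number of generator letters in this factorization is (m−δ)(m−δ+1) + m(m−1) + m = n(n−1)/2. -/
/-!
Write `c = X * L`; it fixes `0` and cycles `1 → 2 → ⋯ → n - 1 → 1`, so `c ^ (n - 1) = 1`.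
Conjugation by the involution `ℓ = ℓ_n` fixes `X` and inverts `L`, hence
`X * L ^ (-1) ^ i = ℓ ^ i * c * ℓ ^ i`, and each factor `(L ^ ± 1 * X) ^ k` of the second product
is the inverse of such a power, i.e. `ℓ ^ i * c ^ (n - 1 - k) * ℓ ^ i`. The two products then join
into the single word `∏_{i < n - 2} ℓ ^ i * c ^ (i + 1) * ℓ ^ i = (c ℓ) (c² ℓ) ⋯ (c ^ (n - 2) ℓ) · ℓ ^ (n - 2)`.
The partial products `(c ℓ) ⋯ (c ^ r ℓ)` have a closed form, proved by induction on `r`, and at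
`r = n - 2` this closed form is `y ↦ 1 - m - ℓ ^ (n - 2) y`, which absorbs the final `R ^ m`.
-/

open Equiv

theorem List.prod_map_range_pow_mul_mul_pow {M : Type*} [Monoid M] {s : M} (hs : s * s = 1)
    (a : ℕ → M) (r : ℕ) :
    ((List.range r).map fun i => s ^ i * a i * s ^ i).prod =
      ((List.range r).map fun i => a i * s).prod * s ^ r := by
  induction r with
  | zero => simp
  | succ r ih =>
    have hsr : s ^ r * s ^ r = 1 := by rw [← pow_add, ← two_mul, pow_mul, sq, hs, one_pow]
    simp only [List.range_succ, List.map_append, List.prod_append, List.map_singleton,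
      List.prod_singleton, ih]
    calc _ = ((List.range r).map fun i => a i * s).prod * (s ^ r * s ^ r) * a r * s ^ r := by
          simp only [mul_assoc]
      _ = ((List.range r).map fun i => a i * s).prod * a r * (s * s) * s ^ r := by
          rw [hsr, hs, mul_one, mul_one]
      _ = _ := by simp only [pow_succ', mul_assoc]

namespace LRX

variable {n : ℕ}

lemma natCast_eq_natCast_of_eq_or_eq_add {a b : ℕ} (h : a = b ∨ a = b + n ∨ b = a + n) :
    (a : ZMod n) = b := by
  rcases h with rfl | rfl | rfl <;> simp

lemma exists_natCast_one_sub (hn : 1 < n) {k : ℕ} (hk : k < n) :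
    ∃ v < n, (1 : ZMod n) - k = v ∧ (v + k = 1 ∨ v + k = n + 1) := by
  rcases (by omega : k = 0 ∨ k = 1 ∨ 2 ≤ k) with rfl | rfl | hk2
  · exact ⟨1, hn, by simp, by omega⟩
  · exact ⟨0, by omega, by simp, by omega⟩
  · refine ⟨n + 1 - k, by omega, ?_, by omega⟩
    rw [Nat.cast_sub (by omega), Nat.cast_add, ZMod.natCast_self, zero_add, Nat.cast_one]

lemma swap_zero_one_apply_natCast {j : ℕ} (h2 : 2 ≤ j) (hj : j < n) :
    swap (0 : ZMod n) 1 j = j := by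
  have h1 : ((1 : ℕ) : ZMod n) = 1 := Nat.cast_one
  refine swap_apply_of_ne_of_ne ?_ ?_ <;> intro h
  · have := congrArg ZMod.val h
    rw [ZMod.val_cast_of_lt hj, ZMod.val_zero] at this
    omega
  · rw [← h1] at h
    have := congrArg ZMod.val h
    rw [ZMod.val_cast_of_lt hj, ZMod.val_cast_of_lt (by omega)] at this
    omega

lemma subLeft_one_mul_self : Equiv.subLeft (1 : ZMod n) * Equiv.subLeft 1 = 1 := by
  ext y
  simp

lemma subLeft_one_mul_swap :
    Equiv.subLeft (1 : ZMod n) * swap 0 1 = swap 0 1 * Equiv.subLeft 1 := by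
  have h := swap_apply_apply (Equiv.subLeft (1 : ZMod n)) 0 1
  rw [subLeft_apply, subLeft_apply, sub_zero, sub_self, swap_comm] at h
  nth_rw 2 [h]
  group

lemma subLeft_one_mul_addRight_zpow (z : ℤ) :
    Equiv.subLeft (1 : ZMod n) * Equiv.addRight 1 ^ z =
      Equiv.addRight 1 ^ (-z) * Equiv.subLeft 1 := by
  ext y
  simp
  ring

def xlCycle (n : ℕ) : Perm (ZMod n) :=
  swap 0 1 * Equiv.addRight 1

lemma xlCycle_apply (y : ZMod n) : xlCycle n y = swap 0 1 (y + 1) := rfl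

lemma xlCycle_pow_apply_zero (k : ℕ) : (xlCycle n ^ k) 0 = 0 :=
  Perm.pow_apply_eq_self_of_apply_eq_self (by simp [xlCycle]) k

lemma xlCycle_pow_apply_natCast {j k : ℕ} (hj : 1 ≤ j) (hjk : j + k < n) :
    (xlCycle n ^ k) j = (j + k : ℕ) := by
  induction k with
  | zero => simp
  | succ k ih =>
    rw [pow_succ', Perm.mul_apply, ih (by omega), xlCycle_apply,
      ← Nat.cast_add_one, swap_zero_one_apply_natCast (by omega) (by omega), add_assoc]

lemma xlCycle_pow_apply_natCast_of_le {j k : ℕ} (hj : 1 ≤ j) (hjn : j < n) (hnk : n ≤ j + k)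
    (hk : j + k + 2 ≤ 2 * n) : (xlCycle n ^ k) j = (j + k + 1 - n : ℕ) := by
  have hlast : xlCycle n (n - 1 : ℕ) = 1 := by
    rw [xlCycle_apply, ← Nat.cast_add_one, Nat.sub_add_cancel (by omega),
      ZMod.natCast_self, swap_apply_left]
  obtain ⟨t, rfl⟩ : ∃ t, k = t + 1 + (n - 1 - j) := ⟨j + k - n, by omega⟩
  rw [pow_add, pow_add, pow_one, Perm.mul_apply, Perm.mul_apply,
    xlCycle_pow_apply_natCast hj (by omega), show j + (n - 1 - j) = n - 1 by omega, hlast,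
    ← Nat.cast_one, xlCycle_pow_apply_natCast le_rfl (by omega)]
  congr 1
  omega

lemma xlCycle_pow_sub_one [NeZero n] : xlCycle n ^ (n - 1) = 1 := by
  have := NeZero.pos n
  ext y
  rw [Perm.one_apply, ← y.natCast_zmod_val]
  have hy := y.val_lt
  rcases Nat.eq_zero_or_pos y.val with h0 | hpos
  · rw [h0, Nat.cast_zero, xlCycle_pow_apply_zero]
  · rw [xlCycle_pow_apply_natCast_of_le hpos hy (by omega) (by omega)]
    congr 1
    omega

lemma swap_mul_addRight_zpow_neg_one_pow (i : ℕ) :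
    swap (0 : ZMod n) 1 * Equiv.addRight 1 ^ ((-1 : ℤ) ^ i) =
      Equiv.subLeft 1 ^ i * xlCycle n * Equiv.subLeft 1 ^ i := by
  induction i with
  | zero => simp [xlCycle]
  | succ i ih =>
    calc swap (0 : ZMod n) 1 * Equiv.addRight 1 ^ ((-1 : ℤ) ^ (i + 1))
        = Equiv.subLeft 1 * (swap (0 : ZMod n) 1 * Equiv.addRight 1 ^ ((-1 : ℤ) ^ i)) *
            Equiv.subLeft 1 := by
          rw [← mul_assoc, subLeft_one_mul_swap, mul_assoc _ (Equiv.subLeft 1),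
            subLeft_one_mul_addRight_zpow, mul_assoc, mul_assoc, subLeft_one_mul_self, pow_succ,
            mul_neg_one, mul_one]
      _ = _ := by rw [ih]; group

lemma swap_mul_addRight_zpow_neg_one_pow_pow (i k : ℕ) :
    (swap (0 : ZMod n) 1 * Equiv.addRight 1 ^ ((-1 : ℤ) ^ i)) ^ k =
      Equiv.subLeft 1 ^ i * xlCycle n ^ k * Equiv.subLeft 1 ^ i := by
  have hinv : (Equiv.subLeft (1 : ZMod n) ^ i)⁻¹ = Equiv.subLeft 1 ^ i := by
    rw [← inv_pow, inv_eq_of_mul_eq_one_right subLeft_one_mul_self]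
  have := conj_pow (a := Equiv.subLeft (1 : ZMod n) ^ i) (b := xlCycle n) (i := k)
  rwa [hinv, ← swap_mul_addRight_zpow_neg_one_pow] at this

lemma addRight_zpow_mul_swap_pow [NeZero n] (i k : ℕ) (hk : k ≤ n - 1) :
    (Equiv.addRight 1 ^ ((-1 : ℤ) ^ (i + 1)) * swap (0 : ZMod n) 1) ^ k =
      Equiv.subLeft 1 ^ i * xlCycle n ^ (n - 1 - k) * Equiv.subLeft 1 ^ i := by
  set g := swap (0 : ZMod n) 1 * Equiv.addRight 1 ^ ((-1 : ℤ) ^ i)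
  have hg : g ^ (n - 1) = 1 := by
    rw [swap_mul_addRight_zpow_neg_one_pow_pow, xlCycle_pow_sub_one, mul_one, ← pow_add,
      ← two_mul, pow_mul, sq, subLeft_one_mul_self, one_pow]
  have hinv : Equiv.addRight 1 ^ ((-1 : ℤ) ^ (i + 1)) * swap (0 : ZMod n) 1 = g⁻¹ := by
    rw [mul_inv_rev, swap_inv, ← zpow_neg, pow_succ, mul_neg_one]
  rw [hinv, inv_pow, ← one_mul (g ^ k)⁻¹, ← hg, ← pow_sub g hk,
    swap_mul_addRight_zpow_neg_one_pow_pow]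

/-- The closed form of `(c ℓ) (c² ℓ) ⋯ (c ^ r ℓ)`. With `ρ y = ⌊r/2⌋ + 2 - y` and
`τ y = y - ⌈r/2⌉`, it is `ρ` on the window `{1, …, r + 1}` of representatives and `τ` off it when
`r` is even, and the other way round when `r` is odd. -/
def prefixMap (n r : ℕ) (y : ZMod n) : ZMod n :=
  if (1 ≤ y.val ∧ y.val ≤ r + 1 ↔ Even r) then ((r / 2 + 2 : ℕ) : ZMod n) - y
  else y - ((r + 1) / 2 : ℕ)

lemma prefixMap_zero [NeZero n] (y : ZMod n) : prefixMap n 0 y = y := by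
  obtain ⟨k, hk, rfl⟩ : ∃ k < n, (k : ZMod n) = y := ⟨y.val, y.val_lt, y.natCast_zmod_val⟩
  simp only [prefixMap, ZMod.val_cast_of_lt hk, Even.zero, iff_true]
  split_ifs
  · rw [sub_eq_iff_eq_add, ← Nat.cast_add]
    exact natCast_eq_natCast_of_eq_or_eq_add (by omega)
  · simp

lemma prefixMap_succ {r : ℕ} (hr : r + 3 ≤ n) (y : ZMod n) :
    prefixMap n r ((xlCycle n ^ (r + 1)) (1 - y)) = prefixMap n (r + 1) y := by
  have : NeZero n := ⟨by omega⟩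
  obtain ⟨k, hk, rfl⟩ : ∃ k < n, (k : ZMod n) = y := ⟨y.val, y.val_lt, y.natCast_zmod_val⟩
  obtain ⟨v, hv, hkv, hvk⟩ := exists_natCast_one_sub (by omega) hk
  obtain ⟨w, hw, hvw, hwv⟩ : ∃ w < n, (xlCycle n ^ (r + 1)) v = w ∧
      (v = 0 ∧ w = 0 ∨ 1 ≤ v ∧ w = v + r + 1 ∨ n ≤ v + r + 1 ∧ w + n = v + r + 2) := by
    rcases Nat.eq_zero_or_pos v with rfl | hv0
    · exact ⟨0, by omega, by simp [xlCycle_pow_apply_zero], by omega⟩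
    by_cases hwrap : v + (r + 1) < n
    · exact ⟨v + (r + 1), hwrap, xlCycle_pow_apply_natCast hv0 hwrap, by omega⟩
    · refine ⟨v + (r + 1) + 1 - n, by omega, ?_, by omega⟩
      exact xlCycle_pow_apply_natCast_of_le hv0 hv (by omega) (by omega)
  rw [hkv, hvw]
  simp only [prefixMap, Nat.even_iff, ZMod.val_cast_of_lt hw, ZMod.val_cast_of_lt hk]
  split_ifs <;> rw [sub_eq_sub_iff_add_eq_add, ← Nat.cast_add, ← Nat.cast_add] <;>
    exact natCast_eq_natCast_of_eq_or_eq_add (by omega)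

lemma prod_xlCycle_pow_mul_subLeft_apply {r : ℕ} (hr : r + 2 ≤ n) (y : ZMod n) :
    (((List.range r).map fun i => xlCycle n ^ (i + 1) * Equiv.subLeft 1).prod : Perm (ZMod n)) y =
      prefixMap n r y := by
  have : NeZero n := ⟨by omega⟩
  induction r generalizing y with
  | zero => simp [prefixMap_zero]
  | succ r ih =>
    rw [List.range_succ, List.map_append, List.prod_append, List.map_singleton,
      List.prod_singleton, Perm.mul_apply, Perm.mul_apply, subLeft_apply, ih (by omega),
      prefixMap_succ (by omega)]

lemma prefixMap_sub_two_subLeft_pow (hn : 2 < n) (y : ZMod n) :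
    prefixMap n (n - 2) ((Equiv.subLeft 1 ^ (n - 2)) y) = 1 - (n / 2 : ℕ) - y := by
  have : NeZero n := ⟨by omega⟩
  obtain ⟨k, hk, rfl⟩ : ∃ k < n, (k : ZMod n) = y := ⟨y.val, y.val_lt, y.natCast_zmod_val⟩
  obtain ⟨v, hv, hkv, hvk⟩ : ∃ v < n, (Equiv.subLeft 1 ^ (n - 2)) (k : ZMod n) = v ∧
      (n % 2 = 0 ∧ v = k ∨ n % 2 = 1 ∧ (v + k = 1 ∨ v + k = n + 1)) := by
    rw [Perm.coe_pow]
    rcases Nat.even_or_odd n with he | ho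
    · rw [(subLeft_involutive 1).iterate_even (he.tsub even_two)]
      exact ⟨k, hk, rfl, Or.inl ⟨Nat.even_iff.mp he, rfl⟩⟩
    · rw [(subLeft_involutive 1).iterate_odd (Nat.Odd.sub_even (by omega) ho even_two)]
      obtain ⟨v, hv, hkv, hvk⟩ := exists_natCast_one_sub (by omega) hk
      exact ⟨v, hv, hkv, Or.inr ⟨Nat.odd_iff.mp ho, hvk⟩⟩
  rw [hkv]
  simp only [prefixMap, Nat.even_iff, ZMod.val_cast_of_lt hv]
  split_ifs <;>
    rw [sub_sub, sub_eq_sub_iff_add_eq_add, ← Nat.cast_add, ← Nat.cast_add,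
      ← (Nat.cast_one : ((1 : ℕ) : ZMod n) = 1), ← Nat.cast_add] <;>
    exact natCast_eq_natCast_of_eq_or_eq_add (by omega)

lemma letter_count_eq {m δ : ℕ} (hn : 2 < n) (hnm : n + δ = 2 * m + 1) (hδ : δ ≤ 1) :
    (m - δ) * (m - δ + 1) + m * (m - 1) + m = n * (n - 1) / 2 := by
  obtain ⟨t, rfl⟩ : ∃ t, m = t + 1 := ⟨m - 1, by omega⟩
  refine (Nat.div_eq_of_eq_mul_left two_pos ?_).symm
  rcases (by omega : δ = 0 ∨ δ = 1) with rfl | rfl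
  · obtain rfl : n = 2 * t + 2 + 1 := by omega
    simp only [Nat.sub_zero, Nat.add_sub_cancel]
    ring
  · obtain rfl : n = 2 * t + 1 + 1 := by omega
    simp only [Nat.add_sub_cancel]
    ring

end LRX

open LRX in
/-- For `n > 2`, `m = ⌊n/2⌋`, `δ = 1` if `n` is even and `0`
otherwise, the permutation `ℓ_n : i ↦ 1 - i` of `ZMod n` admits the explicit
factorization
`ℓ_n = (∏_{i=1}^{m−δ} (X · L^{(−1)^{i−1}})^i) · (∏_{i=m−1}^{1} (L^{(−1)^{i−δ}} · X)^i) · R^m`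
into LRX generators (the first product over `i = 1, …, m−δ`, the second over
`i = m−1, …, 1`, with `L⁻¹ = R`), and the total number of generator letters is
`(m−δ)(m−δ+1) + m(m−1) + m = n(n−1)/2`. -/
theorem longest_element_explicit_factorization (n : ℕ) (hn : 2 < n)
    (m δ : ℕ) (hm : m = n / 2) (hδ : δ = if Even n then 1 else 0) :
    Equiv.subLeft (1 : ZMod n) =
      (((List.range (m - δ)).map fun j =>
          (Equiv.swap (0 : ZMod n) 1 *
            (Equiv.addRight (1 : ZMod n)) ^ ((-1 : ℤ) ^ j)) ^ (j + 1)).prod) *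
      (((List.range (m - 1)).map fun j =>
          ((Equiv.addRight (1 : ZMod n)) ^ ((-1 : ℤ) ^ (m - 1 - j - δ)) *
            Equiv.swap (0 : ZMod n) 1) ^ (m - 1 - j)).prod) *
      (Equiv.subRight (1 : ZMod n)) ^ m ∧
    (m - δ) * (m - δ + 1) + m * (m - 1) + m = n * (n - 1) / 2 := by
  have hnm : n + δ = 2 * m + 1 ∧ δ ≤ 1 := by
    rw [hm, hδ]
    split_ifs with h <;> rw [Nat.even_iff] at h <;> omega
  refine ⟨?_, letter_count_eq hn hnm.1 hnm.2⟩
  have : NeZero n := ⟨by omega⟩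
  let g : ℕ → Perm (ZMod n) := fun i =>
    Equiv.subLeft 1 ^ i * xlCycle n ^ (i + 1) * Equiv.subLeft 1 ^ i
  have hfirst : ∀ j ∈ List.range (m - δ),
      (swap (0 : ZMod n) 1 * Equiv.addRight 1 ^ ((-1 : ℤ) ^ j)) ^ (j + 1) = g j :=
    fun j _ => swap_mul_addRight_zpow_neg_one_pow_pow j (j + 1)
  have hsecond : ((List.range (m - 1)).map fun j =>
      (Equiv.addRight 1 ^ ((-1 : ℤ) ^ (m - 1 - j - δ)) * swap (0 : ZMod n) 1) ^ (m - 1 - j)) =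
        ((List.range (m - 1)).map (m - δ + ·)).map g := by
    rw [List.map_map]
    refine List.map_congr_left fun j hj => ?_
    rw [List.mem_range] at hj
    rw [neg_one_pow_eq_pow_mod_two, show (m - 1 - j - δ) % 2 = (m - δ + j + 1) % 2 by omega,
      ← neg_one_pow_eq_pow_mod_two, addRight_zpow_mul_swap_pow _ _ (by omega),
      show n - 1 - (m - 1 - j) = m - δ + j + 1 by omega]
    rfl
  rw [List.map_congr_left hfirst, hsecond, ← List.prod_append, ← List.map_append,
    ← List.range_add, show m - δ + (m - 1) = n - 2 by omega,
    List.prod_map_range_pow_mul_mul_pow subLeft_one_mul_self]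
  ext x
  rw [Perm.mul_apply, Perm.mul_apply, prod_xlCycle_pow_mul_subLeft_apply (by omega),
    prefixMap_sub_two_subLeft_pow hn, ← hm, subLeft_apply]
  simp [subRight_eq_addRight_neg, sub_eq_add_neg]
end

section
/- For every integer n ≥ 2, the LRX word length of the permutation ℓ_n (defined by ℓ_n(i) = 1 − i in ZMod n) is at most n(n−1)/2; that is, ℓ_n can be written as a product of at most n(n−1)/2 elements of {L, R, X}. -/
namespace LRX
open Equiv

variable {n : ℕ}

/-- rotation by `d` -/
def rot (d : ZMod n) : Equiv.Perm (ZMod n) := Equiv.addRight d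

@[simp] lemma rot_apply (d x : ZMod n) : rot d x = x + d := rfl

lemma rot_mul (a b : ZMod n) : rot a * rot b = rot (a + b) := by
  ext x; simp [rot, Equiv.Perm.mul_apply]; ring

@[simp] lemma rot_zero : (rot (0 : ZMod n)) = 1 := by
  ext x; simp [rot]

lemma rot_inv (a : ZMod n) : (rot a)⁻¹ = rot (-a) := by
  rw [inv_eq_iff_mul_eq_one, rot_mul]; simp

/-- the X generator -/
def Xg : Equiv.Perm (ZMod n) := Equiv.swap 0 1

/-- generator set -/
def S : Set (Equiv.Perm (ZMod n)) :=
  {Equiv.addRight (1 : ZMod n), (Equiv.addRight (1 : ZMod n))⁻¹, Equiv.swap (0 : ZMod n) 1}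

lemma rot_one_mem : (rot (1 : ZMod n)) ∈ (S : Set (Equiv.Perm (ZMod n))) := Or.inl rfl
lemma rot_one_inv_mem : (rot (1 : ZMod n))⁻¹ ∈ (S : Set (Equiv.Perm (ZMod n))) := Or.inr (Or.inl rfl)
lemma Xg_mem : (Xg : Equiv.Perm (ZMod n)) ∈ (S : Set (Equiv.Perm (ZMod n))) := Or.inr (Or.inr rfl)

lemma S_inv_mem {g : Equiv.Perm (ZMod n)} (h : g ∈ (S : Set (Equiv.Perm (ZMod n)))) :
    g⁻¹ ∈ (S : Set (Equiv.Perm (ZMod n))) := by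
  rcases h with h | h | h
  · subst h; exact Or.inr (Or.inl rfl)
  · subst h; simp only [inv_inv]; exact Or.inl rfl
  · subst h; rw [Equiv.swap_inv]; exact Or.inr (Or.inr rfl)

/-- distance of a rotation -/
def dist (d : ZMod n) : ℕ := min d.val (n - d.val)

lemma natCast_val' [NeZero n] (a : ZMod n) : ((a.val : ZMod n)) = a := by
  rw [ZMod.natCast_val, ZMod.cast_id]

lemma neg_natCast (j : ℕ) (hj : j ≤ n) : (-(j : ZMod n)) = ((n - j : ℕ) : ZMod n) := by
  have : ((n : ℕ) : ZMod n) = 0 := ZMod.natCast_self n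
  push_cast [Nat.cast_sub hj]
  rw [this]; ring

lemma dist_natCast (j : ℕ) (hj : j < n) : dist ((j : ZMod n)) = min j (n - j) := by
  unfold dist; rw [ZMod.val_cast_of_lt hj]

lemma dist_one (hn : 2 ≤ n) : dist (1 : ZMod n) = 1 := by
  have : ((1 : ℕ) : ZMod n) = (1 : ZMod n) := by push_cast; rfl
  rw [← this, dist_natCast 1 (by omega)]; omega

lemma rot_pow (k : ℕ) : (rot (1 : ZMod n))^k = rot (k : ZMod n) := by
  induction k with
  | zero => simp
  | succ k ih => rw [pow_succ, ih, rot_mul]; push_cast; ring_nf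

/-- rotation words -/
lemma exists_rotword [NeZero n] (d : ZMod n) :
    ∃ w : List (Equiv.Perm (ZMod n)), (∀ x ∈ w, x ∈ (S : Set (Equiv.Perm (ZMod n)))) ∧
      w.prod = rot d ∧ w.length = dist d := by
  rcases le_total d.val (n - d.val) with h | h
  · refine ⟨List.replicate d.val (rot 1), ?_, ?_, ?_⟩
    · intro x hx; rw [List.eq_of_mem_replicate hx]; exact rot_one_mem
    · rw [List.prod_replicate, rot_pow, natCast_val']
    · rw [List.length_replicate]; unfold dist; omega
  · refine ⟨List.replicate (n - d.val) (rot 1)⁻¹, ?_, ?_, ?_⟩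
    · intro x hx; rw [List.eq_of_mem_replicate hx]; exact rot_one_inv_mem
    · rw [List.prod_replicate, inv_pow, rot_pow, rot_inv,
        neg_natCast _ (by omega), Nat.sub_sub_self (le_of_lt (ZMod.val_lt d)), natCast_val']
    · rw [List.length_replicate]; unfold dist; omega


open Equiv

variable {n : ℕ}

/-- the moving-comparator generator: swap at position p -/
def tau (p : ZMod n) : Equiv.Perm (ZMod n) := rot p * Xg * (rot p)⁻¹

lemma tau_eq_swap (p : ZMod n) : tau p = Equiv.swap p (p + 1) := by
  have h := Equiv.swap_apply_apply (rot p) (0 : ZMod n) 1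
  simp only [rot_apply, zero_add] at h
  rw [tau, Xg, ← h, add_comm]

/-- `Realize P p q k`: there is a word of length ≤ k in the generators whose
product is `(rot q)⁻¹ * P * rot p` (comparator enters at `p`, leaves at `q`). -/
def Realize (P : Equiv.Perm (ZMod n)) (p q : ZMod n) (k : ℕ) : Prop :=
  ∃ w : List (Equiv.Perm (ZMod n)), (∀ x ∈ w, x ∈ (S : Set (Equiv.Perm (ZMod n)))) ∧
    w.prod = (rot q)⁻¹ * P * rot p ∧ w.length ≤ k

lemma Realize.mono {P : Equiv.Perm (ZMod n)} {p q : ZMod n} {k k' : ℕ}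
    (h : Realize P p q k) (hk : k ≤ k') : Realize P p q k' := by
  obtain ⟨w, h1, h2, h3⟩ := h; exact ⟨w, h1, h2, le_trans h3 hk⟩

lemma realize_one (p : ZMod n) : Realize 1 p p 0 :=
  ⟨[], by simp, by simp, by simp⟩

lemma realize_move [NeZero n] (p q : ZMod n) : Realize 1 p q (dist (p - q)) := by
  obtain ⟨w, h1, h2, h3⟩ := exists_rotword (p - q)
  exact ⟨w, h1, by rw [h2, rot_inv]; rw [mul_one, rot_mul]; ring_nf, le_of_eq h3⟩

lemma realize_fire (p : ZMod n) : Realize (tau p) p p 1 := by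
  refine ⟨[Xg], by simpa using Xg_mem, ?_, by simp⟩
  simp only [List.prod_cons, List.prod_nil, mul_one, tau]
  group

lemma Realize.comp {P Q : Equiv.Perm (ZMod n)} {p q r : ZMod n} {a b : ℕ}
    (hP : Realize P p q a) (hQ : Realize Q q r b) : Realize (Q * P) p r (a + b) := by
  obtain ⟨w1, m1, p1, l1⟩ := hP
  obtain ⟨w2, m2, p2, l2⟩ := hQ
  refine ⟨w2 ++ w1, ?_, ?_, ?_⟩
  · intro x hx; rcases List.mem_append.mp hx with h | h
    · exact m2 x h
    · exact m1 x h
  · rw [List.prod_append, p1, p2]; group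
  · rw [List.length_append]; omega

lemma Realize.inv {P : Equiv.Perm (ZMod n)} {p q : ZMod n} {a : ℕ}
    (hP : Realize P p q a) : Realize P⁻¹ q p a := by
  obtain ⟨w, m1, p1, l1⟩ := hP
  refine ⟨(w.map fun x => x⁻¹).reverse, ?_, ?_, ?_⟩
  · intro x hx
    rw [List.mem_reverse, List.mem_map] at hx
    obtain ⟨y, hy, rfl⟩ := hx
    exact S_inv_mem (m1 y hy)
  · rw [← List.prod_inv_reverse, p1]; group
  · simpa using l1

/-- close a realization into an actual word for `rot A * P`. -/
lemma Realize.finish [NeZero n] {P : Equiv.Perm (ZMod n)} {q : ZMod n} {a : ℕ}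
    (hP : Realize P 0 q a) (A : ZMod n) :
    ∃ w : List (Equiv.Perm (ZMod n)), (∀ x ∈ w, x ∈ (S : Set (Equiv.Perm (ZMod n)))) ∧
      w.prod = rot A * P ∧ w.length ≤ a + dist (A + q) := by
  obtain ⟨w, m1, p1, l1⟩ := hP
  obtain ⟨v, mv, pv, lv⟩ := exists_rotword (A + q)
  refine ⟨v ++ w, ?_, ?_, ?_⟩
  · intro x hx; rcases List.mem_append.mp hx with h | h
    · exact mv x h
    · exact m1 x h
  · rw [List.prod_append, p1, pv, rot_inv]
    simp only [rot_zero, mul_one]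
    rw [show rot (A + q) * (rot (-q) * P) = (rot (A + q) * rot (-q)) * P by group, rot_mul]
    ring_nf
  · rw [List.length_append]; omega




/-- decompose any element relative to base point -/
lemma decomp [NeZero n] (a x : ZMod n) : ∃ i, i < n ∧ x = a + (i : ZMod n) := by
  refine ⟨(x - a).val, ZMod.val_lt _, ?_⟩
  rw [natCast_val']; ring

lemma addCast_inj (a : ZMod n) {i j : ℕ} (hi : i < n) (hj : j < n) :
    a + (i : ZMod n) = a + (j : ZMod n) ↔ i = j := by
  constructor
  · intro h
    have h2 : ((i : ZMod n)) = (j : ZMod n) := by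
      have := congrArg (fun z => z - a) h; simpa using this
    have := congrArg ZMod.val h2
    rwa [ZMod.val_cast_of_lt hi, ZMod.val_cast_of_lt hj] at this
  · rintro rfl; rfl

lemma shift_cast (c : ZMod n) {s i : ℕ} (hs : s ≤ i) :
    c + (i : ZMod n) = (c + (s : ZMod n)) + ((i - s : ℕ) : ZMod n) := by
  push_cast [Nat.cast_sub hs]; ring

/-- arc reversal: reverses the arc `{a, a+1, ..., a+m-1}` (when `m ≤ n`). -/
def arevFun (a : ZMod n) (m : ℕ) : ZMod n → ZMod n := fun x =>
  if m ≤ n ∧ (x - a).val < m then ((m - 1 : ℕ) : ZMod n) + a + a - x else x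

lemma arevFun_invol [NeZero n] (a : ZMod n) (m : ℕ) :
    Function.Involutive (arevFun a m) := by
  intro x
  unfold arevFun
  by_cases h : m ≤ n ∧ (x - a).val < m
  · rw [if_pos h]
    have hkey : (((m - 1 : ℕ) : ZMod n) + a + a - x - a).val = m - 1 - (x - a).val := by
      have hxa : ((m - 1 : ℕ) : ZMod n) + a + a - x - a
          = (((m - 1 - (x - a).val : ℕ)) : ZMod n) := by
        rw [Nat.cast_sub (by omega : (x - a).val ≤ m - 1)]
        rw [show (((x-a).val : ℕ) : ZMod n) = x - a from natCast_val' _]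
        ring
      rw [hxa, ZMod.val_cast_of_lt (by omega)]
    rw [if_pos ⟨h.1, by omega⟩]
    ring
  · rw [if_neg h, if_neg h]

def arev [NeZero n] (a : ZMod n) (m : ℕ) : Equiv.Perm (ZMod n) :=
  Function.Involutive.toPerm _ (arevFun_invol a m)

@[simp] lemma arev_apply [NeZero n] (a : ZMod n) (m : ℕ) (x : ZMod n) :
    arev a m x = arevFun a m x := rfl

lemma arev_sq [NeZero n] (a : ZMod n) (m : ℕ) : arev a m * arev a m = 1 := by
  ext x; simp [Equiv.Perm.mul_apply, arevFun_invol a m x]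

lemma arev_inv [NeZero n] (a : ZMod n) (m : ℕ) : (arev a m)⁻¹ = arev a m := by
  rw [inv_eq_iff_mul_eq_one, arev_sq]

lemma arev_apply_in [NeZero n] (a : ZMod n) {m i : ℕ} (hm : m ≤ n) (hi : i < m) :
    arev a m (a + (i : ZMod n)) = a + ((m - 1 - i : ℕ) : ZMod n) := by
  have hin : i < n := lt_of_lt_of_le hi hm
  have hval : (a + (i : ZMod n) - a).val = i := by
    rw [show a + (i : ZMod n) - a = (i : ZMod n) by ring, ZMod.val_cast_of_lt hin]
  rw [arev_apply, arevFun, if_pos ⟨hm, by omega⟩,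
    Nat.cast_sub (by omega : i ≤ m - 1)]
  ring

lemma arev_apply_out [NeZero n] (a : ZMod n) {m i : ℕ} (hi : m ≤ i) (hin : i < n) :
    arev a m (a + (i : ZMod n)) = a + (i : ZMod n) := by
  have hval : (a + (i : ZMod n) - a).val = i := by
    rw [show a + (i : ZMod n) - a = (i : ZMod n) by ring, ZMod.val_cast_of_lt hin]
  rw [arev_apply, arevFun, if_neg (by omega)]

lemma arev_one [NeZero n] (a : ZMod n) : arev a 1 = 1 := by
  ext x
  obtain ⟨i, hin, rfl⟩ := decomp a x
  rcases Nat.eq_zero_or_pos i with rfl | hi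
  · rw [arev_apply_in a (by omega) (by omega)]; simp
  · rw [arev_apply_out a (by omega) hin]; simp

lemma tau_apply_rel [NeZero n] (a : ZMod n) {j i : ℕ} (hj1 : j + 1 < n) (hin : i < n) :
    tau (a + (j : ZMod n)) (a + (i : ZMod n)) =
      if i = j then a + ((j+1 : ℕ) : ZMod n)
      else if i = j + 1 then a + (j : ZMod n) else a + (i : ZMod n) := by
  have hswap : tau (a + (j : ZMod n)) = Equiv.swap (a + (j : ZMod n)) (a + ((j+1 : ℕ) : ZMod n)) := by
    rw [tau_eq_swap]; push_cast; ring_nf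
  rw [hswap]
  by_cases h1 : i = j
  · subst h1; rw [if_pos rfl, Equiv.swap_apply_left]
  · rw [if_neg h1]
    by_cases h2 : i = j + 1
    · subst h2; rw [if_pos rfl, Equiv.swap_apply_right]
    · rw [if_neg h2, Equiv.swap_apply_of_ne_of_ne]
      · intro h; exact h1 ((addCast_inj a hin (by omega)).mp h)
      · intro h; exact h2 ((addCast_inj a hin hj1).mp h)

/-- seed: reversal of a 2-arc is the swap -/
lemma arev_two [NeZero n] (hn : 2 ≤ n) (a : ZMod n) : arev a 2 = tau a := by
  rw [tau_eq_swap]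
  ext x
  obtain ⟨i, hin, rfl⟩ := decomp a x
  by_cases h0 : i = 0
  · subst h0
    rw [arev_apply_in a hn (by omega)]
    push_cast
    simp [Equiv.swap_apply_left]
  · by_cases h1 : i = 1
    · subst h1
      rw [arev_apply_in a hn (by omega)]
      push_cast
      simp [Equiv.swap_apply_right]
    · rw [arev_apply_out a (by omega) hin, Equiv.swap_apply_of_ne_of_ne]
      · intro h
        have : a + (i : ZMod n) = a + ((0:ℕ) : ZMod n) := by rwa [Nat.cast_zero, add_zero]
        exact h0 ((addCast_inj a hin (by omega)).mp this)
      · intro h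
        have : a + (i : ZMod n) = a + ((1:ℕ) : ZMod n) := by rwa [Nat.cast_one]
        exact h1 ((addCast_inj a hin (by omega)).mp this)



lemma shift_one (c : ZMod n) {i : ℕ} (hi : 1 ≤ i) :
    c + (i : ZMod n) = (c + 1) + ((i - 1 : ℕ) : ZMod n) := by
  push_cast [Nat.cast_sub hi]; ring

lemma unshift_one (c : ZMod n) (t : ℕ) :
    (c + 1) + (t : ZMod n) = c + ((t + 1 : ℕ) : ZMod n) := by
  push_cast; ring

/-- key identity for rightward sweeps -/
lemma sweepR_step [NeZero n] (a : ZMod n) {m : ℕ} (h2 : 2 ≤ m) (hmn : m + 1 ≤ n) :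
    arev a (m+1) * arev a m = (arev a m * arev a (m-1)) * tau (a + ((m-1 : ℕ) : ZMod n)) := by
  ext x
  obtain ⟨i, hin, rfl⟩ := decomp a x
  simp only [Equiv.Perm.mul_apply]
  rw [tau_apply_rel a (by omega) hin]
  by_cases hc1 : i < m - 1
  · rw [if_neg (by omega), if_neg (by omega)]
    rw [arev_apply_in a (by omega) (by omega : i < m),
        arev_apply_in a (by omega) (by omega : m - 1 - i < m + 1),
        arev_apply_in a (by omega) (by omega : i < m - 1),
        arev_apply_in a (by omega) (by omega : m - 1 - 1 - i < m)]
    exact congrArg (fun t : ℕ => a + (t : ZMod n)) (by omega)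
  · by_cases hc2 : i = m - 1
    · rw [if_pos hc2]
      rw [arev_apply_in a (by omega) (by omega : i < m),
          arev_apply_in a (by omega) (by omega : m - 1 - i < m + 1),
          arev_apply_out a (by omega : m - 1 ≤ m - 1 + 1) (by omega),
          arev_apply_out a (by omega : m ≤ m - 1 + 1) (by omega)]
      exact congrArg (fun t : ℕ => a + (t : ZMod n)) (by omega)
    · by_cases hc3 : i = m
      · rw [if_neg (by omega), if_pos (by omega : i = m - 1 + 1)]
        rw [arev_apply_out a (by omega : m ≤ i) hin,
            arev_apply_in a (by omega) (by omega : i < m + 1),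
            arev_apply_out a (by omega : m - 1 ≤ m - 1) (by omega),
            arev_apply_in a (by omega) (by omega : m - 1 < m)]
        exact congrArg (fun t : ℕ => a + (t : ZMod n)) (by omega)
      · rw [if_neg (by omega), if_neg (by omega)]
        rw [arev_apply_out a (by omega : m ≤ i) hin,
            arev_apply_out a (by omega : m + 1 ≤ i) hin,
            arev_apply_out a (by omega : m - 1 ≤ i) hin,
            arev_apply_out a (by omega : m ≤ i) hin]

/-- key identity for leftward sweeps -/
lemma sweepL_step [NeZero n] (c : ZMod n) {M : ℕ} (h2 : 2 ≤ M) (hMn : M + 1 ≤ n) :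
    arev c (M+1) * arev (c+1) M = tau (c + ((M-1 : ℕ) : ZMod n)) * (arev c M * arev (c+1) (M-1)) := by
  ext x
  obtain ⟨i, hin, rfl⟩ := decomp c x
  simp only [Equiv.Perm.mul_apply]
  by_cases hc0 : i = 0
  · subst hc0
    have hout : c + ((0:ℕ) : ZMod n) = (c+1) + ((n-1 : ℕ) : ZMod n) := by
      have h1 : ((n : ℕ) : ZMod n) = 0 := ZMod.natCast_self n
      push_cast [Nat.cast_sub (by omega : 1 ≤ n)]
      rw [h1]; ring
    rw [hout,
        arev_apply_out (c+1) (by omega : M ≤ n - 1) (by omega),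
        arev_apply_out (c+1) (by omega : M - 1 ≤ n - 1) (by omega),
        ← hout,
        arev_apply_in c (by omega) (by omega : 0 < M + 1),
        arev_apply_in c (by omega) (by omega : 0 < M)]
    rw [tau_apply_rel c (by omega) (by omega : M - 1 - 0 < n)]
    rw [if_pos (by omega : M - 1 - 0 = M - 1)]
    exact congrArg (fun t : ℕ => c + (t : ZMod n)) (by omega)
  · by_cases hc1 : i ≤ M - 1
    · rw [shift_one c (by omega : 1 ≤ i),
          arev_apply_in (c+1) (by omega) (by omega : i - 1 < M),
          arev_apply_in (c+1) (by omega) (by omega : i - 1 < M - 1),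
          unshift_one, unshift_one,
          arev_apply_in c (by omega) (by omega : M - 1 - (i-1) + 1 < M + 1),
          arev_apply_in c (by omega) (by omega : M - 1 - 1 - (i-1) + 1 < M)]
      rw [tau_apply_rel c (by omega) (by omega : M - 1 - (M - 1 - 1 - (i-1) + 1) < n)]
      rw [if_neg (by omega), if_neg (by omega)]
      exact congrArg (fun t : ℕ => c + (t : ZMod n)) (by omega)
    · by_cases hc2 : i = M
      · rw [shift_one c (by omega : 1 ≤ i),
            arev_apply_in (c+1) (by omega) (by omega : i - 1 < M),
            arev_apply_out (c+1) (by omega : M - 1 ≤ i - 1) (by omega),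
            unshift_one, unshift_one,
            arev_apply_in c (by omega) (by omega : M - 1 - (i-1) + 1 < M + 1),
            arev_apply_out c (by omega : M ≤ i - 1 + 1) (by omega)]
        rw [tau_apply_rel c (by omega) (by omega : i - 1 + 1 < n)]
        rw [if_neg (by omega), if_pos (by omega : i - 1 + 1 = M - 1 + 1)]
        exact congrArg (fun t : ℕ => c + (t : ZMod n)) (by omega)
      · rw [shift_one c (by omega : 1 ≤ i),
            arev_apply_out (c+1) (by omega : M ≤ i - 1) (by omega),
            arev_apply_out (c+1) (by omega : M - 1 ≤ i - 1) (by omega),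
            ← shift_one c (by omega : 1 ≤ i),
            arev_apply_out c (by omega : M + 1 ≤ i) hin,
            arev_apply_out c (by omega : M ≤ i) hin]
        rw [tau_apply_rel c (by omega) hin]
        rw [if_neg (by omega), if_neg (by omega)]




lemma Realize.congr {P P' : Equiv.Perm (ZMod n)} {p p' q q' : ZMod n} {k : ℕ}
    (h : Realize P p q k) (hP : P = P') (hp : p = p') (hq : q = q') : Realize P' p' q' k := by
  subst hP; subst hp; subst hq; exact h

lemma collapse {G : Type*} [Group G] (X Y : G) (hY : Y * Y = 1) : (X * Y) * (1 * Y) = X := by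
  rw [one_mul, mul_assoc, hY, mul_one]

lemma dist_zero [NeZero n] : dist (0 : ZMod n) = 0 := by
  unfold dist; rw [ZMod.val_zero]; omega

lemma dist_neg_one [NeZero n] (hn : 2 ≤ n) : dist (-1 : ZMod n) = 1 := by
  have h1 : (-1 : ZMod n) = ((n - 1 : ℕ) : ZMod n) := by
    have := neg_natCast (n := n) 1 (by omega)
    push_cast at this
    rw [← this]
  rw [h1, dist_natCast _ (by omega)]
  omega

/-- realization of a rightward sweep -/
lemma sweepR [NeZero n] (a : ZMod n) : ∀ m : ℕ, 2 ≤ m → m ≤ n →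
    Realize (arev a m * arev a (m-1)) (a + ((m-2 : ℕ) : ZMod n)) a (2*m-3) := by
  intro m hm
  induction m, hm using Nat.le_induction with
  | base =>
    intro hn
    refine ((realize_fire a).congr ?_ ?_ rfl).mono (by norm_num)
    · rw [show (2:ℕ) - 1 = 1 by norm_num, arev_one, mul_one, arev_two hn a]
    · norm_num
  | succ m hm ih =>
    intro hmn
    have hstep := sweepR_step a hm hmn
    have hfire := realize_fire (a + ((m-1 : ℕ) : ZMod n))
    have hmove := realize_move (a + ((m-1 : ℕ) : ZMod n)) (a + ((m-2 : ℕ) : ZMod n))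
    have hdm : (a + ((m-1 : ℕ) : ZMod n)) - (a + ((m-2 : ℕ) : ZMod n)) = 1 := by
      rw [Nat.cast_sub (by omega : 1 ≤ m), Nat.cast_sub (by omega : 2 ≤ m)]
      push_cast; ring
    rw [hdm, dist_one (by omega)] at hmove
    have hih := ih (by omega)
    have h2 := (hfire.comp hmove).comp hih
    refine (h2.congr ?_ ?_ rfl).mono (by omega)
    · rw [one_mul, show m+1-1 = m from by omega]; exact hstep.symm
    · exact congrArg (fun t : ℕ => a + (t : ZMod n)) (by omega : m - 1 = m + 1 - 2)

/-- realization of a leftward sweep -/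
lemma sweepL [NeZero n] (c : ZMod n) : ∀ M : ℕ, 2 ≤ M → M ≤ n →
    Realize (arev c M * arev (c+1) (M-1)) c (c + ((M-2 : ℕ) : ZMod n)) (2*M-3) := by
  intro M hM
  induction M, hM using Nat.le_induction with
  | base =>
    intro hn
    refine ((realize_fire c).congr ?_ rfl ?_).mono (by norm_num)
    · rw [show (2:ℕ) - 1 = 1 by norm_num, arev_one, mul_one, arev_two hn c]
    · norm_num
  | succ M hM ih =>
    intro hMn
    have hstep := sweepL_step c hM hMn
    have hfire := realize_fire (c + ((M-1 : ℕ) : ZMod n))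
    have hmove := realize_move (c + ((M-2 : ℕ) : ZMod n)) (c + ((M-1 : ℕ) : ZMod n))
    have hdm : (c + ((M-2 : ℕ) : ZMod n)) - (c + ((M-1 : ℕ) : ZMod n)) = -1 := by
      rw [Nat.cast_sub (by omega : 1 ≤ M), Nat.cast_sub (by omega : 2 ≤ M)]
      push_cast; ring
    rw [hdm, dist_neg_one (by omega)] at hmove
    have hih := ih (by omega)
    have h2 := (hih.comp hmove).comp hfire
    refine (h2.congr ?_ rfl ?_).mono (by omega)
    · rw [one_mul, show M+1-1 = M from by omega]; exact hstep.symm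
    · exact congrArg (fun t : ℕ => c + (t : ZMod n)) (by omega : M - 1 = M + 1 - 2)




/-- double extension, ending at the left end -/
lemma dextL [NeZero n] (b : ZMod n) {s : ℕ} (hs : 2 ≤ s) (hsn : s + 2 ≤ n)
    {p : ZMod n} {c : ℕ} (h : Realize (arev b s) p b c) :
    Realize (arev (b - 1) (s+2)) p (b - 1) (c + (4*s + 2)) := by
  have hmv1 := realize_move b (b - 1)
  rw [show b - (b - 1) = 1 by ring, dist_one (by omega)] at hmv1
  have hsl := sweepL (b - 1) (s+1) (by omega) (by omega)
  rw [show s+1-1 = s from by omega, show s+1-2 = s-1 from by omega, sub_add_cancel] at hsl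
  have h1 := (h.comp hmv1).comp hsl
  rw [collapse _ _ (arev_sq _ _)] at h1
  -- h1 : Realize (arev (b-1) (s+1)) p ((b-1) + ↑(s-1)) (c + 1 + (2*(s+1)-3))
  have hmv2 := realize_move ((b-1) + ((s-1 : ℕ) : ZMod n)) ((b-1) + (s : ZMod n))
  have hd2 : ((b-1) + ((s-1 : ℕ) : ZMod n)) - ((b-1) + (s : ZMod n)) = -1 := by
    rw [Nat.cast_sub (by omega : 1 ≤ s)]; push_cast; ring
  rw [hd2, dist_neg_one (by omega)] at hmv2
  have hsr := sweepR (b - 1) (s+2) (by omega) (by omega)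
  rw [show s+2-1 = s+1 from by omega, show ((s+2-2 : ℕ) : ZMod n) = (s : ZMod n) from by norm_num] at hsr
  have h2 := (h1.comp hmv2).comp hsr
  rw [collapse _ _ (arev_sq _ _)] at h2
  exact h2.mono (by omega)

/-- double extension, ending at the right end -/
lemma dextR [NeZero n] (b : ZMod n) {s : ℕ} (hs : 2 ≤ s) (hsn : s + 2 ≤ n)
    {p : ZMod n} {c : ℕ} (h : Realize (arev b s) p (b + ((s-2 : ℕ) : ZMod n)) c) :
    Realize (arev (b - 1) (s+2)) p ((b - 1) + (s : ZMod n)) (c + (4*s + 2)) := by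
  have hmv1 := realize_move (b + ((s-2 : ℕ) : ZMod n)) (b + ((s-1 : ℕ) : ZMod n))
  have hd1 : (b + ((s-2 : ℕ) : ZMod n)) - (b + ((s-1 : ℕ) : ZMod n)) = -1 := by
    rw [Nat.cast_sub (by omega : 1 ≤ s), Nat.cast_sub (by omega : 2 ≤ s)]; push_cast; ring
  rw [hd1, dist_neg_one (by omega)] at hmv1
  have hsr := sweepR b (s+1) (by omega) (by omega)
  rw [show s+1-1 = s from by omega, show s+1-2 = s-1 from by omega] at hsr
  have h1 := (h.comp hmv1).comp hsr
  rw [collapse _ _ (arev_sq _ _)] at h1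
  -- h1 : Realize (arev b (s+1)) p b (c + 1 + (2*(s+1)-3))
  have hmv2 := realize_move b (b - 1)
  rw [show b - (b - 1) = 1 by ring, dist_one (by omega)] at hmv2
  have hsl := sweepL (b - 1) (s+2) (by omega) (by omega)
  rw [show s+2-1 = s+1 from by omega, show ((s+2-2 : ℕ) : ZMod n) = (s : ZMod n) from by norm_num,
    sub_add_cancel] at hsl
  have h2 := (h1.comp hmv2).comp hsl
  rw [collapse _ _ (arev_sq _ _)] at h2
  exact h2.mono (by omega)

lemma ST_even [NeZero n] (a : ZMod n) : ∀ k : ℕ, 2*k+2 ≤ n →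
    Realize (arev (a - (k : ZMod n)) (2*k+2)) a (a - (k : ZMod n)) (4*k*k+6*k+1) := by
  intro k
  induction k with
  | zero =>
    intro hn
    refine ((realize_fire a).congr ?_ rfl ?_).mono (by norm_num)
    · rw [show ((0:ℕ) : ZMod n) = 0 by norm_num, sub_zero]
      exact (arev_two (by omega) a).symm
    · rw [show ((0:ℕ) : ZMod n) = 0 by norm_num, sub_zero]
  | succ k ih =>
    intro hkn
    have h := dextL (a - (k : ZMod n)) (by omega : 2 ≤ 2*k+2) (by omega) (ih (by omega))
    refine (h.congr ?_ rfl ?_).mono ?_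
    · rw [show 2*k+2+2 = 2*(k+1)+2 from by omega]
      congr 1
      push_cast; ring
    · push_cast; ring
    · have h1 : 4*(k+1)*(k+1)+6*(k+1)+1 = 4*k*k+6*k+1 + (4*(2*k+2)+2) := by ring
      omega

lemma ST'_even [NeZero n] (a : ZMod n) : ∀ k : ℕ, 2*k+2 ≤ n →
    Realize (arev (a - (k : ZMod n)) (2*k+2)) a (a + (k : ZMod n)) (4*k*k+6*k+1) := by
  intro k
  induction k with
  | zero =>
    intro hn
    refine ((realize_fire a).congr ?_ rfl ?_).mono (by norm_num)
    · rw [show ((0:ℕ) : ZMod n) = 0 by norm_num, sub_zero]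
      exact (arev_two (by omega) a).symm
    · rw [show ((0:ℕ) : ZMod n) = 0 by norm_num, add_zero]
  | succ k ih =>
    intro hkn
    have hih := (ih (by omega)).congr rfl rfl
      (show a + (k : ZMod n) = (a - (k : ZMod n)) + ((2*k+2-2 : ℕ) : ZMod n) by
        rw [show 2*k+2-2 = 2*k from by omega]; push_cast; ring)
    have h := dextR (a - (k : ZMod n)) (by omega : 2 ≤ 2*k+2) (by omega) hih
    refine (h.congr ?_ rfl ?_).mono ?_
    · rw [show 2*k+2+2 = 2*(k+1)+2 from by omega]
      congr 1
      push_cast; ring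
    · push_cast; ring
    · have h1 : 4*(k+1)*(k+1)+6*(k+1)+1 = 4*k*k+6*k+1 + (4*(2*k+2)+2) := by ring
      omega

lemma ST_odd [NeZero n] (a : ZMod n) : ∀ k : ℕ, 1 ≤ k → 2*k+1 ≤ n →
    Realize (arev (a - (k : ZMod n)) (2*k+1)) (a - 1) (a - (k : ZMod n)) (4*k*k + (2*k-1)) := by
  intro k hk
  induction k, hk using Nat.le_induction with
  | base =>
    intro hn
    -- seed: arev (a-1) 2 realized at position a-1
    have h0 := (realize_fire (a - 1)).congr (arev_two (by omega) (a-1)).symm rfl rfl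
    -- right extension to arev (a-1) 3
    have hmv := realize_move (a - 1) ((a-1) + ((1:ℕ) : ZMod n))
    have hd : (a - 1) - ((a-1) + ((1:ℕ) : ZMod n)) = -1 := by push_cast; ring
    rw [hd, dist_neg_one (by omega)] at hmv
    have hsr := sweepR (a - 1) 3 (by omega) (by omega)
    rw [show (3:ℕ)-1 = 2 from by norm_num, show ((3-2 : ℕ) : ZMod n) = ((1:ℕ) : ZMod n) from by norm_num] at hsr
    have h1 := (h0.comp hmv).comp hsr
    rw [collapse _ _ (arev_sq _ _)] at h1
    refine (h1.congr ?_ rfl ?_).mono (by norm_num)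
    · congr 1
      push_cast; ring
    · push_cast; ring
  | succ k hk ih =>
    intro hkn
    have h := dextL (a - (k : ZMod n)) (by omega : 2 ≤ 2*k+1) (by omega) (ih (by omega))
    refine (h.congr ?_ rfl ?_).mono ?_
    · rw [show 2*k+1+2 = 2*(k+1)+1 from by omega]
      congr 1
      push_cast; ring
    · push_cast; ring
    · have h1 : 4*(k+1)*(k+1) + 2*(k+1) = 4*k*k + 2*k + (8*k+6) := by ring
      omega

lemma ST'_odd [NeZero n] (a : ZMod n) : ∀ k : ℕ, 1 ≤ k → 2*k+1 ≤ n →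
    Realize (arev (a - (k : ZMod n)) (2*k+1)) a (a + ((k-1 : ℕ) : ZMod n)) (4*k*k + (2*k-1)) := by
  intro k hk
  induction k, hk using Nat.le_induction with
  | base =>
    intro hn
    -- seed: arev a 2 realized, entering at a
    have h0 := (realize_fire a).congr (arev_two (by omega) a).symm rfl rfl
    -- left extension to arev (a-1) 3
    have hmv := realize_move a (a - 1)
    rw [show a - (a - 1) = 1 by ring, dist_one (by omega)] at hmv
    have hsl := sweepL (a - 1) 3 (by omega) (by omega)
    rw [show (3:ℕ)-1 = 2 from by norm_num, show ((3-2 : ℕ) : ZMod n) = ((1:ℕ) : ZMod n) from by norm_num,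
      sub_add_cancel] at hsl
    have h1 := (h0.comp hmv).comp hsl
    rw [collapse _ _ (arev_sq _ _)] at h1
    refine (h1.congr ?_ rfl ?_).mono (by norm_num)
    · congr 1
      push_cast; ring
    · push_cast; ring
  | succ k hk ih =>
    intro hkn
    have hih := (ih (by omega)).congr rfl rfl
      (show a + ((k-1:ℕ) : ZMod n) = (a - (k : ZMod n)) + ((2*k+1-2 : ℕ) : ZMod n) by
        rw [show 2*k+1-2 = 2*k-1 from by omega, Nat.cast_sub (by omega : 1 ≤ k),
          Nat.cast_sub (by omega : 1 ≤ 2*k)]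
        push_cast; ring)
    have h := dextR (a - (k : ZMod n)) (by omega : 2 ≤ 2*k+1) (by omega) hih
    refine (h.congr ?_ rfl ?_).mono ?_
    · rw [show 2*k+1+2 = 2*(k+1)+1 from by omega]
      congr 1
      push_cast; ring
    · rw [show ((k+1-1 : ℕ) : ZMod n) = (k : ZMod n) from by norm_num]
      push_cast; ring
    · have h1 : 4*(k+1)*(k+1) + 2*(k+1) = 4*k*k + 2*k + (8*k+6) := by ring
      omega




lemma unshift_cast (c : ZMod n) (s t : ℕ) :
    (c + (s : ZMod n)) + (t : ZMod n) = c + ((s + t : ℕ) : ZMod n) := by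
  push_cast; ring

/-- the big split: a full reflection is the product of two complementary arc reversals -/
lemma split [NeZero n] (b : ZMod n) (h1 h2 : ℕ) (h1p : 1 ≤ h1) (h2p : 1 ≤ h2)
    (hsum : h1 + h2 = n) (x : ZMod n) :
    (arev b h2 * arev (b + (h2 : ZMod n)) h1) x = (b + b + ((h2 - 1 : ℕ) : ZMod n)) - x := by
  have hzero : ((h1 : ZMod n)) + (h2 : ZMod n) = 0 := by
    have : ((n : ℕ) : ZMod n) = 0 := ZMod.natCast_self n
    rw [← this, ← hsum]; push_cast; ring
  obtain ⟨i, hin, rfl⟩ := decomp b x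
  simp only [Equiv.Perm.mul_apply]
  by_cases hc : i < h2
  · -- x in near arc; far arc fixes it
    have hx : b + (i : ZMod n) = (b + (h2 : ZMod n)) + ((i + h1 : ℕ) : ZMod n) := by
      push_cast
      rw [show (b : ZMod n) + i = b + i + 0 by ring, ← hzero]
      ring
    rw [hx, arev_apply_out (b + (h2 : ZMod n)) (by omega : h1 ≤ i + h1) (by omega), ← hx,
      arev_apply_in b (by omega) hc]
    have key : ((h2 - 1 - i : ℕ) : ZMod n) + (i : ZMod n) = ((h2 - 1 : ℕ) : ZMod n) := by
      rw [← Nat.cast_add, show h2 - 1 - i + i = h2 - 1 from by omega]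
    linear_combination key
  · -- x in far arc; near arc fixes the image
    rw [shift_cast b (by omega : h2 ≤ i),
      arev_apply_in (b + (h2 : ZMod n)) (by omega) (by omega : i - h2 < h1),
      unshift_cast,
      arev_apply_out b (by omega : h2 ≤ h2 + (h1 - 1 - (i - h2))) (by omega)]
    have key : ((h2 + (h1 - 1 - (i - h2)) : ℕ) : ZMod n) + (i : ZMod n)
        = ((h2 - 1 : ℕ) : ZMod n) := by
      rw [← Nat.cast_add, show h2 + (h1 - 1 - (i - h2)) + i = n + (h2 - 1) from by omega,
        Nat.cast_add, ZMod.natCast_self, zero_add]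
    have hih2 : ((i - h2 : ℕ) : ZMod n) = (i : ZMod n) - (h2 : ZMod n) := by
      rw [Nat.cast_sub (by omega : h2 ≤ i)]
    linear_combination key + hih2
  -- END of split

/-- final algebraic form of ℓ -/
lemma ell_eq [NeZero n] (A b : ZMod n) (h1 h2 : ℕ) (h1p : 1 ≤ h1) (h2p : 1 ≤ h2)
    (hsum : h1 + h2 = n) (hA : A + (b + b + ((h2 - 1 : ℕ) : ZMod n)) = 1) :
    Equiv.subLeft (1 : ZMod n) = rot A * (arev b h2 * arev (b + (h2 : ZMod n)) h1) := by
  ext x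
  rw [Equiv.Perm.mul_apply, split b h1 h2 h1p h2p hsum x]
  simp only [rot_apply, Equiv.subLeft_apply]
  linear_combination -hA




/-- chaining far word, near word, and closing rotations -/
lemma assemble [NeZero n] {F N : Equiv.Perm (ZMod n)} {pF qF pN qN : ZMod n} {cF cN : ℕ}
    (hF : Realize F pF qF cF) (hN : Realize N pN qN cN) (A : ZMod n)
    (hell : Equiv.subLeft (1 : ZMod n) = rot A * (N * F)) :
    ∃ w : List (Equiv.Perm (ZMod n)), (∀ x ∈ w, x ∈ (S : Set (Equiv.Perm (ZMod n)))) ∧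
      w.prod = Equiv.subLeft (1 : ZMod n) ∧
      w.length ≤ dist (0 - pF) + cF + dist (qF - pN) + cN + dist (A + qN) := by
  have h0 := realize_move 0 pF
  have ht := realize_move qF pN
  have hchain := ((h0.comp hF).comp ht).comp hN
  have hchain' := hchain.congr (show N * (1 * (F * 1)) = N * F by
    simp only [one_mul, mul_one]) rfl rfl
  obtain ⟨w, hw, hprod, hlen⟩ := hchain'.finish A
  exact ⟨w, hw, by rw [hprod, ← hell], by omega⟩




theorem main_result (n : ℕ) (hn : 2 ≤ n) :
    ∃ w : List (Equiv.Perm (ZMod n)),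
      (∀ x ∈ w, x ∈ (S : Set (Equiv.Perm (ZMod n)))) ∧
      w.prod = Equiv.subLeft (1 : ZMod n) ∧
      w.length ≤ n * (n - 1) / 2 := by
  haveI : NeZero n := ⟨by omega⟩
  rcases eq_or_ne n 2 with rfl | hne2
  · refine ⟨[Equiv.addRight 1], ?_, ?_, by norm_num⟩
    · intro x hx
      rw [List.mem_singleton] at hx; subst hx; exact rot_one_mem
    · rw [List.prod_singleton]; ext x; revert x; decide
  rcases eq_or_ne n 3 with rfl | hne3
  · refine ⟨[Equiv.swap 0 1], ?_, ?_, by norm_num⟩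
    · intro x hx
      rw [List.mem_singleton] at hx; subst hx; exact Xg_mem
    · rw [List.prod_singleton]; ext x; revert x; decide
  obtain ⟨j, hj⟩ : ∃ j, n = 4*j+4 ∨ n = 4*j+5 ∨ n = 4*j+6 ∨ n = 4*j+7 :=
    ⟨(n-4)/4, by omega⟩
  rcases hj with rfl | rfl | rfl | rfl
  · -- n = 4j+4
    have hF := ST'_even (((2*j+2 : ℕ) : ZMod (4*j+4))) j (by omega)
    have hN := (ST_even ((0 : ZMod (4*j+4))) j (by omega)).inv
    rw [arev_inv] at hN
    have hb : ((2*j+2 : ℕ) : ZMod (4*j+4)) - ((j : ℕ) : ZMod (4*j+4))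
        = (0 - ((j:ℕ) : ZMod (4*j+4))) + ((2*j+2 : ℕ) : ZMod (4*j+4)) := by ring
    have hell := ell_eq (0 : ZMod (4*j+4)) (0 - (j : ZMod (4*j+4))) (2*j+2) (2*j+2)
      (by omega) (by omega) (by omega)
      (by rw [show 2*j+2-1 = 2*j+1 from by omega]; push_cast; ring)
    rw [← hb] at hell
    obtain ⟨w, hw, hp, hl⟩ := assemble hF hN 0 hell
    refine ⟨w, hw, hp, ?_⟩
    have e1 : dist ((0 : ZMod (4*j+4)) - ((2*j+2:ℕ) : ZMod (4*j+4))) = 2*j+2 := by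
      rw [zero_sub, neg_natCast _ (by omega), show 4*j+4 - (2*j+2) = 2*j+2 from by omega,
        dist_natCast _ (by omega)]
      omega
    have e2 : dist ((((2*j+2:ℕ) : ZMod (4*j+4)) + (j : ZMod (4*j+4))) - (0 - (j : ZMod (4*j+4))))
        = 2 := by
      rw [show (((2*j+2:ℕ) : ZMod (4*j+4)) + (j : ZMod (4*j+4))) - (0 - (j : ZMod (4*j+4)))
        = ((4*j+2 : ℕ) : ZMod (4*j+4)) by push_cast; ring, dist_natCast _ (by omega)]
      omega
    have e3 : dist ((0 : ZMod (4*j+4)) + 0) = 0 := by rw [add_zero, dist_zero]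
    rw [e1, e2, e3] at hl
    have hq : (4*j+4) * (4*j+4-1)/2 = 8*j*j+14*j+6 := by
      rw [show 4*j+4-1 = 4*j+3 from by omega]
      have : (4*j+4) * (4*j+3) = 2*(8*j*j+14*j+6) := by ring
      omega
    refine le_trans hl ?_
    rw [hq]
    exact le_of_eq (by ring)
  · -- n = 4j+5
    have hF := ST'_even (((2*j+2 : ℕ) : ZMod (4*j+5))) j (by omega)
    have hN := (ST_odd ((0 : ZMod (4*j+5))) (j+1) (by omega) (by omega)).inv
    rw [arev_inv] at hN
    have hb : ((2*j+2 : ℕ) : ZMod (4*j+5)) - ((j : ℕ) : ZMod (4*j+5))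
        = (0 - ((j+1:ℕ) : ZMod (4*j+5))) + ((2*(j+1)+1 : ℕ) : ZMod (4*j+5)) := by
      push_cast; ring
    have hell := ell_eq (1 : ZMod (4*j+5)) (0 - ((j+1 : ℕ) : ZMod (4*j+5))) (2*j+2) (2*(j+1)+1)
      (by omega) (by omega) (by omega)
      (by rw [show 2*(j+1)+1-1 = 2*j+2 from by omega]; push_cast; ring)
    rw [← hb] at hell
    obtain ⟨w, hw, hp, hl⟩ := assemble hF hN 1 hell
    refine ⟨w, hw, hp, ?_⟩
    have e1 : dist ((0 : ZMod (4*j+5)) - ((2*j+2:ℕ) : ZMod (4*j+5))) = 2*j+2 := by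
      rw [zero_sub, neg_natCast _ (by omega), show 4*j+5 - (2*j+2) = 2*j+3 from by omega,
        dist_natCast _ (by omega)]
      omega
    have e2 : dist ((((2*j+2:ℕ) : ZMod (4*j+5)) + (j : ZMod (4*j+5)))
        - (0 - ((j+1 : ℕ) : ZMod (4*j+5)))) = 2 := by
      rw [show (((2*j+2:ℕ) : ZMod (4*j+5)) + (j : ZMod (4*j+5))) - (0 - ((j+1:ℕ) : ZMod (4*j+5)))
        = ((4*j+3 : ℕ) : ZMod (4*j+5)) by push_cast; ring, dist_natCast _ (by omega)]
      omega
    have e3 : dist ((1 : ZMod (4*j+5)) + (0 - 1)) = 0 := by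
      rw [show (1 : ZMod (4*j+5)) + (0 - 1) = 0 by ring, dist_zero]
    rw [e1, e2, e3] at hl
    have hq : (4*j+5) * (4*j+5-1)/2 = 8*j*j+18*j+10 := by
      rw [show 4*j+5-1 = 4*j+4 from by omega]
      have : (4*j+5) * (4*j+4) = 2*(8*j*j+18*j+10) := by ring
      omega
    simp only [show 2*(j+1)-1 = 2*j+1 from by omega] at hl
    refine le_trans hl ?_
    rw [hq]
    exact le_of_eq (by ring)
  · -- n = 4j+6
    have hF := ST_odd (((2*j+3 : ℕ) : ZMod (4*j+6))) (j+1) (by omega) (by omega)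
    have hN := (ST'_odd ((0 : ZMod (4*j+6))) (j+1) (by omega) (by omega)).inv
    rw [arev_inv] at hN
    simp only [show j+1-1 = j from by omega] at hN
    have hb : ((2*j+3 : ℕ) : ZMod (4*j+6)) - ((j+1 : ℕ) : ZMod (4*j+6))
        = (0 - ((j+1:ℕ) : ZMod (4*j+6))) + ((2*(j+1)+1 : ℕ) : ZMod (4*j+6)) := by
      push_cast; ring
    have hell := ell_eq (1 : ZMod (4*j+6)) (0 - ((j+1 : ℕ) : ZMod (4*j+6))) (2*(j+1)+1) (2*(j+1)+1)
      (by omega) (by omega) (by omega)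
      (by rw [show 2*(j+1)+1-1 = 2*j+2 from by omega]; push_cast; ring)
    rw [← hb] at hell
    obtain ⟨w, hw, hp, hl⟩ := assemble hF hN 1 hell
    refine ⟨w, hw, hp, ?_⟩
    have e1 : dist ((0 : ZMod (4*j+6)) - (((2*j+3:ℕ) : ZMod (4*j+6)) - 1)) = 2*j+2 := by
      have hns : ((4*j+6 : ℕ) : ZMod (4*j+6)) = 0 := ZMod.natCast_self _
      rw [show (0 : ZMod (4*j+6)) - (((2*j+3:ℕ) : ZMod (4*j+6)) - 1)
        = ((2*j+4 : ℕ) : ZMod (4*j+6)) by push_cast at hns ⊢; linear_combination -hns,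
        dist_natCast _ (by omega)]
      omega
    have e2 : dist ((((2*j+3:ℕ) : ZMod (4*j+6)) - ((j+1 : ℕ) : ZMod (4*j+6)))
        - ((0 : ZMod (4*j+6)) + ((j : ℕ) : ZMod (4*j+6)))) = 2 := by
      rw [show (((2*j+3:ℕ) : ZMod (4*j+6)) - ((j+1:ℕ) : ZMod (4*j+6)))
        - ((0 : ZMod (4*j+6)) + ((j:ℕ) : ZMod (4*j+6)))
        = ((2 : ℕ) : ZMod (4*j+6)) by push_cast; ring, dist_natCast _ (by omega)]
      omega
    have e3 : dist ((1 : ZMod (4*j+6)) + 0) = 1 := by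
      rw [add_zero, dist_one (by omega)]
    rw [e1, e2, e3] at hl
    have hq : (4*j+6) * (4*j+6-1)/2 = 8*j*j+22*j+15 := by
      rw [show 4*j+6-1 = 4*j+5 from by omega]
      have : (4*j+6) * (4*j+5) = 2*(8*j*j+22*j+15) := by ring
      omega
    simp only [show 2*(j+1)-1 = 2*j+1 from by omega] at hl
    refine le_trans hl ?_
    rw [hq]
    exact le_of_eq (by ring)
  · -- n = 4j+7
    have hF := ST'_even (((2*j+3 : ℕ) : ZMod (4*j+7))) (j+1) (by omega)
    have hN := (ST_odd ((0 : ZMod (4*j+7))) (j+1) (by omega) (by omega)).inv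
    rw [arev_inv] at hN
    have hb : ((2*j+3 : ℕ) : ZMod (4*j+7)) - ((j+1 : ℕ) : ZMod (4*j+7))
        = (0 - ((j+1:ℕ) : ZMod (4*j+7))) + ((2*(j+1)+1 : ℕ) : ZMod (4*j+7)) := by
      push_cast; ring
    have hell := ell_eq (1 : ZMod (4*j+7)) (0 - ((j+1 : ℕ) : ZMod (4*j+7))) (2*(j+1)+2) (2*(j+1)+1)
      (by omega) (by omega) (by omega)
      (by rw [show 2*(j+1)+1-1 = 2*j+2 from by omega]; push_cast; ring)
    rw [← hb] at hell
    obtain ⟨w, hw, hp, hl⟩ := assemble hF hN 1 hell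
    refine ⟨w, hw, hp, ?_⟩
    have e1 : dist ((0 : ZMod (4*j+7)) - ((2*j+3:ℕ) : ZMod (4*j+7))) = 2*j+3 := by
      rw [zero_sub, neg_natCast _ (by omega), show 4*j+7 - (2*j+3) = 2*j+4 from by omega,
        dist_natCast _ (by omega)]
      omega
    have e2 : dist ((((2*j+3:ℕ) : ZMod (4*j+7)) + ((j+1 : ℕ) : ZMod (4*j+7)))
        - (0 - ((j+1 : ℕ) : ZMod (4*j+7)))) = 2 := by
      rw [show (((2*j+3:ℕ) : ZMod (4*j+7)) + ((j+1:ℕ) : ZMod (4*j+7)))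
        - (0 - ((j+1:ℕ) : ZMod (4*j+7)))
        = ((4*j+5 : ℕ) : ZMod (4*j+7)) by push_cast; ring, dist_natCast _ (by omega)]
      omega
    have e3 : dist ((1 : ZMod (4*j+7)) + (0 - 1)) = 0 := by
      rw [show (1 : ZMod (4*j+7)) + (0 - 1) = 0 by ring, dist_zero]
    rw [e1, e2, e3] at hl
    have hq : (4*j+7) * (4*j+7-1)/2 = 8*j*j+26*j+21 := by
      rw [show 4*j+7-1 = 4*j+6 from by omega]
      have : (4*j+7) * (4*j+6) = 2*(8*j*j+26*j+21) := by ring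
      omega
    simp only [show 2*(j+1)-1 = 2*j+1 from by omega] at hl
    refine le_trans hl ?_
    rw [hq]
    exact le_of_eq (by ring)


end LRX


/-- For every `n ≥ 2`, the permutation `ℓ_n : i ↦ 1 - i` of
`ZMod n` can be written as a product of at most `n(n-1)/2` elements of
`{L, R, X}`, i.e. its LRX word length is at most `n(n-1)/2`. -/
theorem longest_element_length_upper_bound (n : ℕ) (hn : 2 ≤ n) :
    ∃ w : List (Equiv.Perm (ZMod n)),
      (∀ x ∈ w, x ∈ ({Equiv.addRight (1 : ZMod n),
          (Equiv.addRight (1 : ZMod n))⁻¹, Equiv.swap (0 : ZMod n) 1} :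
            Set (Equiv.Perm (ZMod n)))) ∧
      w.prod = Equiv.subLeft (1 : ZMod n) ∧
      w.length ≤ n * (n - 1) / 2 := by
  obtain ⟨w, hw, hp, hl⟩ := LRX.main_result n hn
  exact ⟨w, hw, hp, hl⟩
end

section
/- Let H be a simple graph on a finite vertex set V with |V| = n ≥ 3 such that every 3-element subset of V spans an odd number of edges of H. Then the number of edges of H is at least n(n−1)/2 − ⌊n²/4⌋. -/
open Finset

/-- Mantel's theorem: a triangle-free graph on `n` vertices has at most `n²/4` edges. -/
lemma mantel_aux {V : Type*} [Fintype V] [DecidableEq V] (G : SimpleGraph V)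
    [DecidableRel G.Adj]
    (htf : ∀ a b c : V, G.Adj a b → G.Adj a c → G.Adj b c → False) :
    G.edgeFinset.card ≤ Fintype.card V ^ 2 / 4 := by
  set n := Fintype.card V with hn
  set m := G.edgeFinset.card with hm
  -- degree bound for adjacent vertices
  have key : ∀ u v : V, G.Adj u v → G.degree u + G.degree v ≤ n := by
    intro u v huv
    have hdisj : Disjoint (G.neighborFinset u) (G.neighborFinset v) := by
      rw [Finset.disjoint_left]
      intro w hwu hwv
      rw [SimpleGraph.mem_neighborFinset] at hwu hwv
      exact htf u v w huv hwu hwv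
    calc G.degree u + G.degree v
        = (G.neighborFinset u ∪ G.neighborFinset v).card := by
          rw [Finset.card_union_of_disjoint hdisj]; rfl
      _ ≤ (Finset.univ : Finset V).card := Finset.card_le_card (Finset.subset_univ _)
      _ = n := by rw [hn, Fintype.card]
  have hswap : ∀ f : V → ℕ,
      (∑ v, ∑ u ∈ G.neighborFinset v, f u) = ∑ u, G.degree u * f u := by
    intro f
    have h1 : ∀ v : V, ∑ u ∈ G.neighborFinset v, f u
        = ∑ u, if G.Adj v u then f u else 0 := by
      intro v
      rw [← Finset.sum_filter]
      congr 1
      ext u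
      simp [SimpleGraph.mem_neighborFinset]
    simp_rw [h1]
    rw [Finset.sum_comm]
    refine Finset.sum_congr rfl fun u _ => ?_
    rw [← Finset.sum_filter, Finset.sum_const, smul_eq_mul]
    congr 1
    rw [SimpleGraph.degree]
    congr 1
    ext v
    simp [SimpleGraph.mem_neighborFinset, SimpleGraph.adj_comm]
  have hdegsum : ∑ v, G.degree v = 2 * m := G.sum_degrees_eq_twice_card_edges
  -- sum of squares bound
  have hsq : ∑ v, G.degree v ^ 2 ≤ m * n := by
    have h2 : (2 : ℕ) * ∑ v, G.degree v ^ 2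
        = ∑ v, ∑ u ∈ G.neighborFinset v, (G.degree u + G.degree v) := by
      have : ∀ v : V, ∑ u ∈ G.neighborFinset v, (G.degree u + G.degree v)
          = (∑ u ∈ G.neighborFinset v, G.degree u) + G.degree v * G.degree v := by
        intro v
        rw [Finset.sum_add_distrib, Finset.sum_const, smul_eq_mul]
        rfl
      simp_rw [this]
      rw [Finset.sum_add_distrib, hswap]
      simp_rw [← sq]
      rw [two_mul]
    have h3 : ∑ v, ∑ u ∈ G.neighborFinset v, (G.degree u + G.degree v)
        ≤ ∑ v, ∑ u ∈ G.neighborFinset v, n := by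
      refine Finset.sum_le_sum fun v _ => Finset.sum_le_sum fun u hu => ?_
      rw [SimpleGraph.mem_neighborFinset] at hu
      rw [add_comm]
      exact key v u hu
    have h4 : ∑ v, ∑ u ∈ G.neighborFinset v, n = 2 * m * n := by
      simp_rw [Finset.sum_const, smul_eq_mul]
      rw [← Finset.sum_mul]
      simp_rw [SimpleGraph.card_neighborFinset_eq_degree]
      rw [hdegsum]
    have h5 : 2 * ∑ v, G.degree v ^ 2 ≤ 2 * (m * n) := by
      rw [h2]
      calc _ ≤ ∑ v, ∑ u ∈ G.neighborFinset v, n := h3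
        _ = 2 * m * n := h4
        _ = 2 * (m * n) := by ring
    exact Nat.le_of_mul_le_mul_left h5 (by norm_num)
  -- Cauchy-Schwarz over ℤ
  have hcs : ((2 * m : ℕ) : ℤ) ^ 2 ≤ (n : ℤ) * ∑ v, (G.degree v : ℤ) ^ 2 := by
    have := sq_sum_le_card_mul_sum_sq (s := (Finset.univ : Finset V))
      (f := fun v => (G.degree v : ℤ))
    rw [Finset.card_univ, ← hn] at this
    calc ((2 * m : ℕ) : ℤ) ^ 2 = (∑ v, (G.degree v : ℤ)) ^ 2 := by
          rw [← Nat.cast_sum, hdegsum]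
      _ ≤ (n : ℤ) * ∑ v, (G.degree v : ℤ) ^ 2 := this
  have hfinal : 4 * m * m ≤ n * n * m := by
    have h5 : (4 * m * m : ℤ) ≤ (n : ℤ) * (m * n) := by
      calc (4 * m * m : ℤ) = ((2 * m : ℕ) : ℤ) ^ 2 := by push_cast; ring
        _ ≤ (n : ℤ) * ∑ v, (G.degree v : ℤ) ^ 2 := hcs
        _ ≤ (n : ℤ) * (m * n) := by
            have : (∑ v, (G.degree v : ℤ) ^ 2) ≤ ((m * n : ℕ) : ℤ) := by
              rw [show (∑ v, (G.degree v : ℤ) ^ 2) = ((∑ v, G.degree v ^ 2 : ℕ) : ℤ) by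
                push_cast; ring]
              exact_mod_cast hsq
            push_cast at this ⊢
            nlinarith [this, (Nat.cast_nonneg n : (0:ℤ) ≤ n)]
    have : ((4 * m * m : ℕ) : ℤ) ≤ ((n * n * m : ℕ) : ℤ) := by push_cast; linarith
    exact_mod_cast this
  rcases Nat.eq_zero_or_pos m with h | h
  · simp [h]
  · have h6 : 4 * m ≤ n * n := Nat.le_of_mul_le_mul_right (by linarith [hfinal]) h
    rw [Nat.le_div_iff_mul_le (by norm_num)]
    calc m * 4 = 4 * m := by ring
      _ ≤ n * n := h6
      _ = n ^ 2 := (sq n).symm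

/-- If `H` is a simple graph on `n ≥ 3` vertices in which every
3-element subset of vertices spans an odd number of edges, then `H` has at
least `n(n-1)/2 - ⌊n²/4⌋` edges. -/
theorem odd_triples_edge_count_lower_bound {V : Type*} [Fintype V]
    [DecidableEq V] (H : SimpleGraph V) [DecidableRel H.Adj] (n : ℕ)
    (hn : Fintype.card V = n) (hn3 : 3 ≤ n)
    (hodd : ∀ a b c : V, a ≠ b → a ≠ c → b ≠ c →
      Odd ((if H.Adj a b then 1 else 0) + (if H.Adj a c then 1 else 0) +
        (if H.Adj b c then 1 else 0) : ℕ)) :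
    n * (n - 1) / 2 - n ^ 2 / 4 ≤ H.edgeFinset.card := by
  classical
  -- complement is triangle-free
  have htf : ∀ a b c : V, Hᶜ.Adj a b → Hᶜ.Adj a c → Hᶜ.Adj b c → False := by
    intro a b c hab hac hbc
    obtain ⟨hab1, hab2⟩ := hab
    obtain ⟨hac1, hac2⟩ := hac
    obtain ⟨hbc1, hbc2⟩ := hbc
    have := hodd a b c hab1 hac1 hbc1
    simp [hab2, hac2, hbc2] at this
  have hmantel := mantel_aux Hᶜ htf
  rw [hn] at hmantel
  -- edge count of complement
  have hsum : H.edgeFinset.card + Hᶜ.edgeFinset.card = n.choose 2 := by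
    have htop := SimpleGraph.card_edgeFinset_top_eq_card_choose_two (V := V)
    rw [hn] at htop
    rw [← htop]
    rw [← Finset.card_union_of_disjoint
      (SimpleGraph.disjoint_edgeFinset.mpr disjoint_compl_right)]
    congr 1
    rw [← SimpleGraph.edgeFinset_sup]
    have hseq : H ⊔ Hᶜ = ⊤ := sup_compl_eq_top
    ext e
    simp only [SimpleGraph.mem_edgeFinset, hseq]
  have hchoose : n.choose 2 = n * (n - 1) / 2 := Nat.choose_two_right n
  omega
end

section
/- Let n ≥ 3 and c ∈ ZMod n, and let σ_c be the permutation of ZMod n given by σ_c(i) = c − i. Then every word w_1 w_2 ⋯ w_k over the alphabet {L, R, X} whose product in S_n equals σ_c contains at least n(n−1)/2 − ⌊n²/4⌋ occurrences of the letter X. -/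
/-- The alphabet of LRX generator letters. -/
inductive LRXLetter : Type
  | L | R | X
  deriving DecidableEq

/-- Evaluation of an LRX letter as a permutation of `ZMod n`:
`L : i ↦ i + 1`, `R : i ↦ i - 1`, `X = (0 1)`. -/
def LRXLetter.eval (n : ℕ) : LRXLetter → Equiv.Perm (ZMod n)
  | .L => Equiv.addRight (1 : ZMod n)
  | .R => Equiv.subRight (1 : ZMod n)
  | .X => Equiv.swap (0 : ZMod n) 1

/-!
Lift the action to `ℤ`: `L` and `R` translate by `±1` and `X` exchanges `kn` and `kn + 1` for
every `k`. For two tokens at lifted positions `x` and `y`, the parity of `⌊(x - y) / n⌋` changes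
exactly when an `X` exchanges them, and each `X` exchanges exactly one pair of tokens. If the word
realises `σ_c`, a token starting at `a` ends at a lifted position `P a` with `P a + a ≡ c`, so the
parity of `⌊(P a + a) / n⌋` colours the tokens in such a way that any two tokens of the same colour
are exchanged an odd number of times. With `m` and `n - m` tokens of the two colours, this forces
at least `m(m-1)/2 + (n-m)(n-m-1)/2 ≥ n(n-1)/2 - ⌊n²/4⌋` letters `X`.
-/

open Finset

theorem Int.sub_ediv_of_pos {x y n : ℤ} (hn : 0 < n) :
    (x - y) / n = x / n - y / n - if x % n < y % n then 1 else 0 := by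
  have := Int.mul_ediv_add_emod x n
  have := Int.mul_ediv_add_emod y n
  have := Int.emod_nonneg x hn.ne'
  have := Int.emod_nonneg y hn.ne'
  have := Int.emod_lt_of_pos x hn
  have := Int.emod_lt_of_pos y hn
  rw [Int.ediv_eq_iff_of_pos hn]
  split_ifs <;> constructor <;> linarith

theorem ZMod.intCast_eq_zero_iff_emod_eq_zero {n : ℕ} (x : ℤ) :
    (x : ZMod n) = 0 ↔ x % n = 0 := by
  rw [← Int.cast_zero, ZMod.intCast_eq_intCast_iff', Int.zero_emod]

theorem ZMod.intCast_eq_one_iff_emod_eq_one {n : ℕ} (hn : 1 < n) (x : ℤ) :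
    (x : ZMod n) = 1 ↔ x % n = 1 := by
  rw [← Int.cast_one, ZMod.intCast_eq_intCast_iff',
    Int.emod_eq_of_lt zero_le_one (by exact_mod_cast hn)]

theorem mul_sub_one_le_card_offDiag_filter_iff_add {α : Type*} [Fintype α] [DecidableEq α]
    (p : α → Prop) [DecidablePred p] :
    Fintype.card α * (Fintype.card α - 1) ≤
      #{q ∈ (univ : Finset α).offDiag | p q.1 ↔ p q.2} + 2 * (Fintype.card α ^ 2 / 4) := by
  set s : Finset α := {a | p a}
  have hsplit : {q ∈ (univ : Finset α).offDiag | ¬(p q.1 ↔ p q.2)} = s ×ˢ sᶜ ∪ sᶜ ×ˢ s := by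
    ext ⟨a, b⟩
    simp only [s, mem_filter, mem_offDiag, mem_univ, true_and, compl_filter, mem_union, mem_product]
    grind
  have hdisj : Disjoint (s ×ˢ sᶜ) (sᶜ ×ˢ s) := disjoint_product.mpr (.inl disjoint_compl_right)
  have hcard := card_filter_add_card_filter_not (s := (univ : Finset α).offDiag)
    (fun q => p q.1 ↔ p q.2)
  rw [hsplit, card_union_of_disjoint hdisj, card_product, card_product, card_compl, offDiag_card,
    card_univ] at hcard
  obtain ⟨k, hk⟩ := Nat.exists_eq_add_of_le (card_le_univ s)
  have hmk : 4 * (#s * k) ≤ Fintype.card α * Fintype.card α := by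
    rw [hk, ← mul_assoc, ← sq]
    exact four_mul_le_sq_add _ _
  rw [show Fintype.card α - #s = k by omega, mul_comm k] at hcard
  rw [sq, Nat.mul_sub_one]
  omega

namespace LRXLetter

variable {n : ℕ}

def lift (n : ℕ) : LRXLetter → ℤ → ℤ
  | L, x => x + 1
  | R, x => x - 1
  | X, x => if (x : ZMod n) = 0 then x + 1 else if (x : ZMod n) = 1 then x - 1 else x

theorem cast_lift (l : LRXLetter) (x : ℤ) : ((l.lift n x : ℤ) : ZMod n) = l.eval n x := by
  cases l
  · simp [lift, eval]
  · simp [lift, eval]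
  · simp only [lift, eval]
    split_ifs with h0 h1
    · simp [h0]
    · simp [h1]
    · exact (Equiv.swap_apply_of_ne_of_ne h0 h1).symm

theorem lift_X_ediv (hn : 1 < n) (x : ℤ) : X.lift n x / n = x / n := by
  have hn' : (0 : ℤ) < n := by omega
  have := Int.mul_ediv_add_emod x n
  have := Int.emod_nonneg x hn'.ne'
  have := Int.emod_lt_of_pos x hn'
  rw [Int.ediv_eq_iff_of_pos hn']
  simp only [lift, ZMod.intCast_eq_zero_iff_emod_eq_zero, ZMod.intCast_eq_one_iff_emod_eq_one hn]
  split_ifs <;> constructor <;> linarith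

theorem lift_X_emod (hn : 1 < n) (x : ℤ) :
    X.lift n x % n = if x % n = 0 then 1 else if x % n = 1 then 0 else x % n := by
  have key : X.lift n x % n - x % n = X.lift n x - x := by
    rw [Int.emod_def, Int.emod_def, lift_X_ediv hn]
    ring
  simp only [lift, ZMod.intCast_eq_zero_iff_emod_eq_zero,
    ZMod.intCast_eq_one_iff_emod_eq_one hn] at key ⊢
  split_ifs at key ⊢ <;> omega

def Swaps (n : ℕ) (l : LRXLetter) (u v : ZMod n) : Prop :=
  l = X ∧ (u = 0 ∧ v = 1 ∨ u = 1 ∧ v = 0)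

instance (l : LRXLetter) (u v : ZMod n) : Decidable (l.Swaps n u v) := by
  unfold Swaps
  infer_instance

theorem lift_sub_ediv_modEq (hn : 1 < n) (l : LRXLetter) (x y : ℤ) :
    (l.lift n x - l.lift n y) / n ≡ (x - y) / n + if l.Swaps n x y then 1 else 0 [ZMOD 2] := by
  have hn' : (0 : ℤ) < n := by omega
  cases l
  · simp [lift, Swaps]
  · simp [lift, Swaps]
  · simp only [Swaps, true_and, ZMod.intCast_eq_zero_iff_emod_eq_zero,
      ZMod.intCast_eq_one_iff_emod_eq_one hn]
    rw [Int.sub_ediv_of_pos hn', Int.sub_ediv_of_pos hn', lift_X_ediv hn, lift_X_ediv hn,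
      lift_X_emod hn, lift_X_emod hn, Int.ModEq]
    split_ifs <;> omega

theorem sum_swaps_perm_apply [NeZero n] (hn : 1 < n) (π : Equiv.Perm (ZMod n)) (l : LRXLetter) :
    ∑ p : ZMod n × ZMod n, (if l.Swaps n (π p.1) (π p.2) then 1 else 0) =
      if l = X then 2 else 0 := by
  refine (Equiv.sum_comp (π.prodCongr π) (fun p => if l.Swaps n p.1 p.2 then 1 else 0)).trans ?_
  have : Fact (1 < n) := ⟨hn⟩
  cases l
  · simp [Swaps]
  · simp [Swaps]
  · rw [sum_boole]
    have : ({p : ZMod n × ZMod n | X.Swaps n p.1 p.2} : Finset _) = {(0, 1), (1, 0)} := by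
      ext ⟨u, v⟩
      simp [Swaps]
    simp [this]

def liftWord (n : ℕ) : List LRXLetter → ℤ → ℤ
  | [] => id
  | l :: w => l.lift n ∘ liftWord n w

theorem cast_liftWord (w : List LRXLetter) (x : ℤ) :
    ((liftWord n w x : ℤ) : ZMod n) = (w.map (eval n)).prod x := by
  induction w with
  | nil => rfl
  | cons l w ih => simp [liftWord, cast_lift, ih, Equiv.Perm.mul_apply]

def crossings (n : ℕ) (u v : ZMod n) : List LRXLetter → ℕ
  | [] => 0
  | l :: w => crossings n u v w +
      if l.Swaps n ((w.map (eval n)).prod u) ((w.map (eval n)).prod v) then 1 else 0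

theorem sum_crossings [NeZero n] (hn : 1 < n) (w : List LRXLetter) :
    ∑ p : ZMod n × ZMod n, crossings n p.1 p.2 w = 2 * w.count X := by
  induction w with
  | nil => simp [crossings]
  | cons l w ih =>
    simp only [crossings, sum_add_distrib, ih, sum_swaps_perm_apply hn, List.count_cons]
    cases l <;> simp [mul_add]

theorem liftWord_sub_ediv_modEq (hn : 1 < n) (w : List LRXLetter) (x y : ℤ) :
    (liftWord n w x - liftWord n w y) / n ≡ (x - y) / n + crossings n x y w [ZMOD 2] := by
  induction w with
  | nil => simp [liftWord, crossings]
  | cons l w ih =>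
    have step := lift_sub_ediv_modEq hn l (liftWord n w x) (liftWord n w y)
    simp only [cast_liftWord] at step
    simp only [liftWord, crossings, Function.comp_apply, Nat.cast_add, Nat.cast_ite, Nat.cast_one,
      Nat.cast_zero]
    calc _ ≡ _ [ZMOD 2] := step
      _ ≡ _ [ZMOD 2] := ih.add_right _
      _ = _ := add_assoc _ _ _

theorem odd_crossings [NeZero n] (hn : 1 < n) {w : List LRXLetter} {a b : ZMod n} (hab : a ≠ b)
    (hsum : (w.map (eval n)).prod a + a = (w.map (eval n)).prod b + b)
    (heven : Even ((liftWord n w a.val + a.val) / n) ↔ Even ((liftWord n w b.val + b.val) / n)) :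
    Odd (crossings n a b w) := by
  have hn' : (0 : ℤ) < n := by omega
  have hdvd : (n : ℤ) ∣ (liftWord n w a.val + a.val) - (liftWord n w b.val + b.val) := by
    rw [← ZMod.intCast_zmod_eq_zero_iff_dvd]
    simp only [Int.cast_sub, Int.cast_add, cast_liftWord, Int.cast_natCast, ZMod.natCast_zmod_val,
      hsum, sub_self]
  have hres := (Int.modEq_iff_dvd.mpr hdvd).symm
  have key := liftWord_sub_ediv_modEq hn w a.val b.val
  simp only [Int.cast_natCast, ZMod.natCast_zmod_val] at key
  -- `P a + a` and `P b + b` have the same residue, so the final winding of `(a, b)` is the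
  -- difference of their quotients plus the initial winding of `(b, a)`.
  rw [show liftWord n w a.val - liftWord n w b.val =
      (liftWord n w a.val + a.val - (liftWord n w b.val + b.val)) + ((b.val : ℤ) - a.val) by ring,
    Int.add_ediv_of_dvd_left hdvd, Int.sub_ediv_of_pos hn', Int.sub_ediv_of_pos hn',
    Int.sub_ediv_of_pos hn'] at key
  have hval (x : ZMod n) : (x.val : ℤ) / n = 0 ∧ (x.val : ℤ) % n = x.val :=
    have : (x.val : ℤ) < n := by exact_mod_cast x.val_lt
    ⟨Int.ediv_eq_zero_of_lt (by positivity) this, Int.emod_eq_of_lt (by positivity) this⟩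
  have := hval a
  have := hval b
  have hne : a.val ≠ b.val := fun h => hab (ZMod.val_injective n h)
  rw [Int.even_iff, Int.even_iff] at heven
  rw [Nat.odd_iff]
  unfold Int.ModEq at key hres
  split_ifs at key <;> omega

end LRXLetter

open LRXLetter

/-- For `n ≥ 3` and `c ∈ ZMod n`, every word over the
alphabet `{L, R, X}` whose product in `S_n` equals the reflection
`σ_c : i ↦ c - i` contains at least `n(n-1)/2 - ⌊n²/4⌋` occurrences of the
letter `X`. -/
theorem reflection_word_many_X (n : ℕ) (hn : 3 ≤ n) (c : ZMod n)
    (w : List LRXLetter)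
    (hw : (w.map (LRXLetter.eval n)).prod = Equiv.subLeft c) :
    n * (n - 1) / 2 - n ^ 2 / 4 ≤ w.count LRXLetter.X := by
  have hn1 : 1 < n := by omega
  have : NeZero n := ⟨by omega⟩
  set color : ZMod n → Prop := fun a => Even ((liftWord n w a.val + a.val) / n)
  have hcount := mul_sub_one_le_card_offDiag_filter_iff_add color
  rw [ZMod.card] at hcount
  set same : Finset (ZMod n × ZMod n) := {q ∈ univ.offDiag | color q.1 ↔ color q.2}
  have hsame : #same ≤ 2 * w.count X := by
    rw [← sum_crossings hn1 w]
    calc #same = #same • 1 := (mul_one _).symm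
      _ ≤ ∑ q ∈ same, crossings n q.1 q.2 w := by
        refine card_nsmul_le_sum _ _ _ fun q hq => ?_
        rw [mem_filter, mem_offDiag] at hq
        exact (odd_crossings hn1 hq.1.2.2 (by simp [hw]) hq.2).pos
      _ ≤ ∑ q : ZMod n × ZMod n, crossings n q.1 q.2 w := sum_le_sum_of_subset (subset_univ _)
  omega
end

section
/- For every integer n ≥ 3, the diameter of the LRX Cayley graph of S_n is at least n(n−1) − 2⌊n²/4⌋ − 1; for even n this lower bound equals n(n−1)/2 − n/2 − 1. -/
/-!
Follow each token on the universal cover `ℤ` of the cycle `ZMod n`, starting from `v ↦ v.val`.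
`L` and `R` move all tokens by the same amount, while `X` moves only the two tokens at `0` and `1`,
so it changes the winding number of a single pair of tokens, by at most one. Hence the windings
produced by a word with `k` letters `X` sum, over ordered pairs, to at most `2k`. For the
reversal `v ↦ -v` every lift has the form `P v = n M v - v.val`, and the winding of a pair can
only vanish when the two values of `M` have different parity; this forces a total winding of at
least `n(n-1) - 2⌊n²/4⌋`. A shortest word has no factor `X X`, so its length is at least
`2k - 1`.
-/

/-- The LRX word length of a permutation `g` of `ZMod n`: the least `k` such
that `g` is a product of `k` elements of `{L, R, X}`, where `L : i ↦ i + 1`,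
`R = L⁻¹ : i ↦ i - 1` and `X = (0 1)` (the identity has word length 0). -/
noncomputable def lrxLength (n : ℕ) (g : Equiv.Perm (ZMod n)) : ℕ :=
  sInf {k : ℕ | ∃ w : List (Equiv.Perm (ZMod n)),
    (∀ x ∈ w, x ∈ ({Equiv.addRight (1 : ZMod n),
        (Equiv.addRight (1 : ZMod n))⁻¹, Equiv.swap (0 : ZMod n) 1} :
          Set (Equiv.Perm (ZMod n)))) ∧
    w.prod = g ∧ w.length = k}

open Equiv Finset

theorem Int.ediv_eq_ediv_of_abs_sub_le_one {n a b : ℤ} (hn : 0 < n) (ha : ¬ n ∣ a)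
    (hb : ¬ n ∣ b) (hab : |a - b| ≤ 1) : a / n = b / n := by
  have ha₁ := Int.mul_ediv_self_le (x := a) hn.ne'
  have ha₂ := Int.lt_mul_ediv_self_add (x := a) hn
  have hb₁ := Int.mul_ediv_self_le (x := b) hn.ne'
  have hb₂ := Int.lt_mul_ediv_self_add (x := b) hn
  have ha₃ : n * (a / n) ≠ a := fun h => ha ⟨a / n, h.symm⟩
  have hb₃ : n * (b / n) ≠ b := fun h => hb ⟨b / n, h.symm⟩
  rw [abs_le] at hab
  apply le_antisymm <;> by_contra! h
  · have := mul_le_mul_of_nonneg_left (Int.add_one_le_of_lt h) hn.le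
    have := lt_of_le_of_ne ha₁ ha₃
    linarith
  · have := mul_le_mul_of_nonneg_left (Int.add_one_le_of_lt h) hn.le
    have := lt_of_le_of_ne hb₁ hb₃
    linarith

theorem Int.abs_ediv_sub_ediv_le_one {n a b : ℤ} (hn : 0 < n) (hab : |a - b| ≤ n) :
    |a / n - b / n| ≤ 1 := by
  have ha₁ := Int.mul_ediv_self_le (x := a) hn.ne'
  have ha₂ := Int.lt_mul_ediv_self_add (x := a) hn
  have hb₁ := Int.mul_ediv_self_le (x := b) hn.ne'
  have hb₂ := Int.lt_mul_ediv_self_add (x := b) hn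
  rw [abs_le] at hab ⊢
  constructor <;> by_contra! h <;> nlinarith

theorem Int.mul_sub_ediv_sub_ediv {n d : ℤ} (hn : 0 < n) (hd : ¬ n ∣ d) (m : ℤ) :
    (n * m - d) / n - d / n = m - 1 - 2 * (d / n) := by
  rw [show n * m - d = -d + m * n by ring, Int.add_mul_ediv_right _ _ hn.ne', Int.neg_ediv,
    if_neg hd, Int.sign_eq_one_of_pos hn]
  ring

theorem Fintype.card_filter_ne_le {α : Type*} [Fintype α] (f : α → Bool) :
    #{p : α × α | f p.1 ≠ f p.2} ≤ 2 * (Fintype.card α ^ 2 / 4) := by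
  classical
  set E : Finset α := {a | f a}
  set O : Finset α := {a | ¬ f a}
  have hsub : ({p : α × α | f p.1 ≠ f p.2} : Finset (α × α)) ⊆ E ×ˢ O ∪ O ×ˢ E := by
    rintro ⟨a, b⟩
    cases ha : f a <;> cases hb : f b <;> simp [E, O, ha, hb]
  have hEO : #E + #O = Fintype.card α := card_filter_add_card_filter_not _
  have hprod : 4 * (#E * #O) ≤ Fintype.card α ^ 2 := by
    rw [← hEO]; nlinarith [sq_nonneg ((#E : ℤ) - #O)]
  calc #{p : α × α | f p.1 ≠ f p.2} ≤ #(E ×ˢ O) + #(O ×ˢ E) :=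
        (card_le_card hsub).trans (card_union_le _ _)
    _ = 2 * (#E * #O) := by rw [card_product, card_product]; ring
    _ ≤ 2 * (Fintype.card α ^ 2 / 4) := by
        gcongr; exact (Nat.le_div_iff_mul_le (by norm_num)).mpr (by linarith)

theorem List.two_mul_count_le_length_add_one {α : Type*} [BEq α] [LawfulBEq α] (a : α) :
    ∀ l : List α, l.IsChain (fun x y => x = a → y ≠ a) → 2 * l.count a ≤ l.length + 1
  | [], _ => by simp
  | [x], _ => by
    rw [count_singleton]; split <;> simp
  | x :: y :: l, h => by
    obtain ⟨hxy, hyl⟩ := isChain_cons_cons.mp h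
    by_cases hx : x = a
    · have := two_mul_count_le_length_add_one a l hyl.tail
      simp [hx, hxy hx]
      omega
    · have := two_mul_count_le_length_add_one a (y :: l) hyl
      simp [count_cons, hx] at this ⊢
      omega

def lrxGens (n : ℕ) : Set (Perm (ZMod n)) :=
  {Equiv.addRight 1, (Equiv.addRight 1)⁻¹, swap 0 1}

namespace LRX

variable {n : ℕ} {P : ZMod n → ℤ} {g : Perm (ZMod n)}

/-- `P v` is a position of token `v` on the universal cover `ℤ` of the cycle `ZMod n`, lying
over its position `g v`. -/
def IsLift (P : ZMod n → ℤ) (g : Perm (ZMod n)) : Prop :=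
  ∀ v, (P v : ZMod n) = g v

/-- How many times token `y` has overtaken token `x` along the cycle, measured against the
starting positions `v ↦ v.val`. -/
def winding (P : ZMod n → ℤ) (x y : ZMod n) : ℤ :=
  (P y - P x) / n - ((y.val : ℤ) - x.val) / n

theorem IsLift.add_const (hP : IsLift P g) (c : ℤ) :
    IsLift (fun v => P v + c) (Equiv.addRight (c : ZMod n) * g) := by
  intro v
  simp [hP v]

theorem IsLift.not_dvd_sub (hP : IsLift P g) {x y : ZMod n} (hxy : x ≠ y) :
    ¬ (n : ℤ) ∣ P y - P x := by
  rw [← ZMod.intCast_zmod_eq_zero_iff_dvd, Int.cast_sub, hP, hP, sub_eq_zero]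
  exact fun h => hxy (g.injective h).symm

theorem val_swap_sub_val_eq_zero {z : ZMod n} (h₀ : z ≠ 0) (h₁ : z ≠ 1) :
    ((swap 0 1 z).val : ℤ) - z.val = 0 := by
  rw [swap_apply_of_ne_of_ne h₀ h₁, sub_self]

theorem abs_val_swap_sub_val_le (hn : 2 ≤ n) (z : ZMod n) :
    |((swap 0 1 z).val : ℤ) - z.val| ≤ 1 := by
  have : Fact (1 < n) := ⟨hn⟩
  by_cases h₀ : z = 0
  · simp only [h₀, swap_apply_left, ZMod.val_one, ZMod.val_zero]; norm_num
  by_cases h₁ : z = 1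
  · simp only [h₁, swap_apply_right, ZMod.val_one, ZMod.val_zero]; norm_num
  rw [val_swap_sub_val_eq_zero h₀ h₁]; norm_num

theorem winding_self (x : ZMod n) : winding P x x = 0 := by
  simp [winding]

section

variable [NeZero n]

def totalWinding (P : ZMod n → ℤ) : ℕ :=
  ∑ p : ZMod n × ZMod n, (winding P p.1 p.2).natAbs

theorem isLift_val : IsLift (fun v : ZMod n => (v.val : ℤ)) 1 := by
  intro v
  simp

theorem IsLift.add_val_sub_val (hP : IsLift P g) (σ : Perm (ZMod n)) :
    IsLift (fun v => P v + ((σ (g v)).val - (g v).val)) (σ * g) := by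
  intro v
  simp [hP v]

theorem totalWinding_val : totalWinding (fun v : ZMod n => (v.val : ℤ)) = 0 := by
  simp [totalWinding, winding]

theorem totalWinding_add_const (c : ℤ) : totalWinding (fun v => P v + c) = totalWinding P := by
  simp [totalWinding, winding]

theorem abs_winding_add_sub_winding_le (e : ZMod n → ℤ) {x y : ZMod n}
    (he : |e y - e x| ≤ n) : |winding (fun v => P v + e v) x y - winding P x y| ≤ 1 := by
  have hn : (0 : ℤ) < n := by exact_mod_cast Nat.pos_of_neZero n
  simp only [winding, sub_sub_sub_cancel_right]
  refine Int.abs_ediv_sub_ediv_le_one hn ?_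
  rwa [show P y + e y - (P x + e x) - (P y - P x) = e y - e x by ring]

theorem winding_add_eq {g' : Perm (ZMod n)} {e : ZMod n → ℤ} (hP : IsLift P g)
    (hQ : IsLift (fun v => P v + e v) g') {x y : ZMod n} (hxy : x ≠ y) (he : |e y - e x| ≤ 1) :
    winding (fun v => P v + e v) x y = winding P x y := by
  have hn : (0 : ℤ) < n := by exact_mod_cast Nat.pos_of_neZero n
  simp only [winding, sub_left_inj]
  refine Int.ediv_eq_ediv_of_abs_sub_le_one hn (hQ.not_dvd_sub hxy) (hP.not_dvd_sub hxy) ?_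
  rwa [show P y + e y - (P x + e x) - (P y - P x) = e y - e x by ring]

theorem natAbs_winding_add_swap_le (hn : 2 ≤ n) (hP : IsLift P g) (x y : ZMod n) :
    (winding (fun v => P v + (((swap 0 1 (g v)).val : ℤ) - (g v).val)) x y).natAbs ≤
      (winding P x y).natAbs +
        if (x, y) ∈ ({(g.symm 0, g.symm 1), (g.symm 1, g.symm 0)} : Finset _) then 1 else 0 := by
  set e : ZMod n → ℤ := fun v => ((swap 0 1 (g v)).val : ℤ) - (g v).val
  change (winding (fun v => P v + e v) x y).natAbs ≤ _
  have he_abs : ∀ v, |e v| ≤ 1 := fun v => abs_val_swap_sub_val_le hn (g v)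
  split_ifs with hp
  · have he : |e y - e x| ≤ n :=
      calc |e y - e x| ≤ |e y| + |e x| := abs_sub _ _
        _ ≤ n := by linarith [he_abs x, he_abs y, (by exact_mod_cast hn : (2 : ℤ) ≤ n)]
    have := abs_le.mp (abs_winding_add_sub_winding_le (P := P) e he)
    omega
  obtain rfl | hxy := eq_or_ne x y
  · simp [winding_self]
  have hmoved : e x = 0 ∨ e y = 0 := by
    have he_zero : ∀ v, g v ≠ 0 → g v ≠ 1 → e v = 0 := fun v => val_swap_sub_val_eq_zero
    by_contra! h
    have hx : x = g.symm 0 ∨ x = g.symm 1 := by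
      rw [eq_symm_apply, eq_symm_apply]; by_contra! h'; exact h.1 (he_zero x h'.1 h'.2)
    have hy : y = g.symm 0 ∨ y = g.symm 1 := by
      rw [eq_symm_apply, eq_symm_apply]; by_contra! h'; exact h.2 (he_zero y h'.1 h'.2)
    rcases hx with rfl | rfl <;> rcases hy with rfl | rfl <;> simp_all
  have he : |e y - e x| ≤ 1 := by
    rcases hmoved with h | h <;> simpa [h] using he_abs _
  rw [winding_add_eq hP (hP.add_val_sub_val (swap 0 1)) hxy he]
  omega

theorem totalWinding_add_swap_le (hn : 2 ≤ n) (hP : IsLift P g) :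
    totalWinding (fun v => P v + (((swap 0 1 (g v)).val : ℤ) - (g v).val)) ≤
      totalWinding P + 2 :=
  calc _ ≤ ∑ p : ZMod n × ZMod n, ((winding P p.1 p.2).natAbs +
          if p ∈ ({(g.symm 0, g.symm 1), (g.symm 1, g.symm 0)} : Finset _) then 1 else 0) :=
        sum_le_sum fun p _ => natAbs_winding_add_swap_le hn hP p.1 p.2
    _ = totalWinding P + #({(g.symm 0, g.symm 1), (g.symm 1, g.symm 0)} : Finset _) := by
        rw [sum_add_distrib, sum_boole, filter_mem_eq_inter, univ_inter]; rfl
    _ ≤ totalWinding P + 2 := by gcongr; exact card_le_two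

theorem odd_of_isLift_neg_of_winding_eq_zero (hP : IsLift P (Equiv.neg (ZMod n))) {x y : ZMod n}
    (hxy : x ≠ y) (h : winding P x y = 0) :
    Odd ((P y + y.val) / n - (P x + x.val) / n) := by
  have hn : (0 : ℤ) < n := by exact_mod_cast Nat.pos_of_neZero n
  have hM : ∀ v : ZMod n, P v + v.val = n * ((P v + v.val) / n) := fun v => by
    refine (Int.mul_ediv_cancel' ?_).symm
    rw [← ZMod.intCast_zmod_eq_zero_iff_dvd]
    simp [hP v]
  have hd : ¬ (n : ℤ) ∣ (y.val : ℤ) - x.val := by simpa using isLift_val.not_dvd_sub hxy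
  have hsub :
      P y - P x = n * ((P y + y.val) / n - (P x + x.val) / n) - ((y.val : ℤ) - x.val) := by
    linarith [hM x, hM y]
  rw [winding, hsub, Int.mul_sub_ediv_sub_ediv hn hd] at h
  exact ⟨((y.val : ℤ) - x.val) / n, by linarith⟩

theorem totalWinding_ge_of_isLift_neg (hP : IsLift P (Equiv.neg (ZMod n))) :
    n * (n - 1) - 2 * (n ^ 2 / 4) ≤ totalWinding P := by
  classical
  set f : ZMod n → Bool := fun v => decide (Even ((P v + v.val) / n))
  set S : Finset (ZMod n × ZMod n) := {p | p.1 ≠ p.2 ∧ f p.1 = f p.2}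
  set D : Finset (ZMod n × ZMod n) := {p | f p.1 ≠ f p.2}
  have hcover : n * (n - 1) ≤ #S + #D :=
    calc n * (n - 1) = #(univ : Finset (ZMod n)).offDiag := by
          rw [offDiag_card, card_univ, ZMod.card, Nat.mul_sub_one]
      _ ≤ #(S ∪ D) := card_le_card fun p => by
          simp only [mem_offDiag, mem_union, mem_filter, mem_univ, true_and, S, D]
          tauto
      _ ≤ _ := card_union_le _ _
  have hdiff : #D ≤ 2 * (n ^ 2 / 4) := by simpa [ZMod.card] using Fintype.card_filter_ne_le f
  have hS : #S ≤ totalWinding P :=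
    calc #S = ∑ _p ∈ S, 1 := card_eq_sum_ones S
      _ ≤ ∑ p ∈ S, (winding P p.1 p.2).natAbs := sum_le_sum fun p hp => by
          simp only [S, mem_filter, mem_univ, true_and] at hp
          suffices winding P p.1 p.2 ≠ 0 by omega
          intro h0
          have hodd := Int.odd_sub.mp (odd_of_isLift_neg_of_winding_eq_zero hP hp.1 h0)
          have hpar : Even ((P p.1 + (p.1).val) / n) ↔ Even ((P p.2 + (p.2).val) / n) := by
            simpa [f] using hp.2
          rw [← Int.not_even_iff_odd] at hodd
          tauto
      _ ≤ totalWinding P := sum_le_sum_of_subset (subset_univ S)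
  omega

theorem exists_isLift_totalWinding_le (hn : 2 ≤ n) :
    ∀ w : List (Perm (ZMod n)), (∀ a ∈ w, a ∈ lrxGens n) →
      ∃ P, IsLift P w.prod ∧ totalWinding P ≤ 2 * w.count (swap 0 1)
  | [], _ => ⟨_, isLift_val, totalWinding_val.trans_le (Nat.zero_le _)⟩
  | a :: w, hw => by
    obtain ⟨P, hP, hPw⟩ :=
      exists_isLift_totalWinding_le hn w fun b hb => hw b (List.mem_cons_of_mem a hb)
    have hcount : w.count (swap 0 1) ≤ (a :: w).count (swap 0 1) := List.count_le_count_cons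
    rw [List.prod_cons]
    rcases hw a List.mem_cons_self with rfl | rfl | rfl
    · refine ⟨fun v => P v + 1, by simpa using hP.add_const 1, ?_⟩
      rw [totalWinding_add_const]
      omega
    · refine ⟨fun v => P v + (-1), ?_, ?_⟩
      · simpa [Perm.inv_def, addRight_symm] using hP.add_const (-1)
      · rw [totalWinding_add_const]
        omega
    · refine ⟨_, hP.add_val_sub_val (swap 0 1), ?_⟩
      have := totalWinding_add_swap_le hn hP
      simp only [List.count_cons_self]
      omega

end

end LRX

theorem exists_lrxGens_list_prod_eq {n : ℕ} (hn : 2 ≤ n) (g : Perm (ZMod n)) :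
    ∃ w : List (Perm (ZMod n)), (∀ a ∈ w, a ∈ lrxGens n) ∧ w.prod = g := by
  have : Fact (1 < n) := ⟨hn⟩
  have hcycle : (Equiv.addRight (1 : ZMod n)).IsCycle :=
    ⟨0, by simp, fun y _ => ⟨y.val, by simp⟩⟩
  have hsupp : (Equiv.addRight (1 : ZMod n)).support = univ := by
    ext x
    simp
  have hclosure := Perm.closure_cycle_adjacent_swap hcycle hsupp 0
  simp only [coe_addRight, zero_add] at hclosure
  have hg : g ∈ (Subgroup.closure {Equiv.addRight (1 : ZMod n), swap 0 1}).toSubmonoid := by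
    rw [hclosure]
    exact Subgroup.mem_top g
  rw [Subgroup.closure_toSubmonoid] at hg
  obtain ⟨w, hw, rfl⟩ := Submonoid.exists_list_of_mem_closure hg
  refine ⟨w, fun a ha => ?_, rfl⟩
  rcases hw a ha with h | h
  · rcases h with rfl | rfl <;> simp [lrxGens]
  · rw [Set.mem_inv, Set.mem_insert_iff, Set.mem_singleton_iff, inv_eq_iff_eq_inv,
      inv_eq_iff_eq_inv, swap_inv] at h
    rcases h with rfl | rfl
    exacts [Or.inr (Or.inl rfl), Or.inr (Or.inr rfl)]

theorem lrxLength_le {n : ℕ} {w : List (Perm (ZMod n))} (hw : ∀ a ∈ w, a ∈ lrxGens n) :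
    lrxLength n w.prod ≤ w.length :=
  Nat.sInf_le ⟨w, hw, rfl, rfl⟩

theorem exists_isChain_length_eq_lrxLength {n : ℕ} (hn : 2 ≤ n) (g : Perm (ZMod n)) :
    ∃ w : List (Perm (ZMod n)), (∀ a ∈ w, a ∈ lrxGens n) ∧ w.prod = g ∧
      w.length = lrxLength n g ∧ w.IsChain (fun a b => a = swap 0 1 → b ≠ swap 0 1) := by
  obtain ⟨w, hw, rfl, hlen⟩ : ∃ w : List (Perm (ZMod n)),
      (∀ a ∈ w, a ∈ lrxGens n) ∧ w.prod = g ∧ w.length = lrxLength n g := by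
    obtain ⟨w, hw, hg⟩ := exists_lrxGens_list_prod_eq hn g
    exact Nat.sInf_mem (s := {k | ∃ w : List (Perm (ZMod n)),
      (∀ a ∈ w, a ∈ lrxGens n) ∧ w.prod = g ∧ w.length = k}) ⟨_, w, hw, hg, rfl⟩
  refine ⟨w, hw, rfl, hlen, List.isChain_iff_forall_rel_of_append_cons_cons.mpr ?_⟩
  rintro a b l₁ l₂ rfl rfl rfl
  have hshort := lrxLength_le (w := l₁ ++ l₂) fun a ha => hw a (by simp at ha ⊢; tauto)
  rw [List.prod_append, List.prod_cons, List.prod_cons, swap_mul_self_mul,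
    ← List.prod_append] at hlen
  simp only [List.length_append, List.length_cons] at hshort hlen
  omega

theorem lrxLength_neg_ge {n : ℕ} (hn : 2 ≤ n) :
    n * (n - 1) - 2 * (n ^ 2 / 4) - 1 ≤ lrxLength n (Equiv.neg (ZMod n)) := by
  have : NeZero n := ⟨by omega⟩
  obtain ⟨w, hw, hprod, hlen, hchain⟩ := exists_isChain_length_eq_lrxLength hn (Equiv.neg _)
  obtain ⟨P, hP, hPw⟩ := LRX.exists_isLift_totalWinding_le hn w hw
  rw [hprod] at hP
  have := LRX.totalWinding_ge_of_isLift_neg hP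
  have := List.two_mul_count_le_length_add_one _ w hchain
  omega

/-- For every `n ≥ 3`, the diameter of the LRX Cayley graph
of `S_n` (the maximum LRX word length over all permutations of `ZMod n`) is at
least `n(n-1) - 2⌊n²/4⌋ - 1`; for even `n` this lower bound equals
`n(n-1)/2 - n/2 - 1`. -/
theorem lrx_diameter_lower_bound (n : ℕ) (hn : 3 ≤ n) :
    n * (n - 1) - 2 * (n ^ 2 / 4) - 1 ≤ sSup (Set.range (lrxLength n)) ∧
    (Even n →
      n * (n - 1) - 2 * (n ^ 2 / 4) - 1 = n * (n - 1) / 2 - n / 2 - 1) := by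
  have : NeZero n := ⟨by omega⟩
  refine ⟨(lrxLength_neg_ge (by omega)).trans
    (le_csSup (Set.finite_range _).bddAbove (Set.mem_range_self _)), ?_⟩
  rintro ⟨m, rfl⟩
  have hsq : (m + m) ^ 2 / 4 = m * m := by
    rw [show (m + m) ^ 2 = 4 * (m * m) by ring]; omega
  have hmul : (m + m) * (m + m - 1) + 2 * m = 4 * (m * m) := by
    obtain ⟨k, rfl⟩ : ∃ k, m = k + 1 := ⟨m - 1, by omega⟩
    rw [show k + 1 + (k + 1) - 1 = 2 * k + 1 by omega]
    ring
  omega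
end

section
/- Let n ≥ 1 and define the cyclic distance on ZMod n by d_C(a, b) = min((a − b).val, (b − a).val), where .val denotes the representative in {0, 1, …, n−1}. Then for every function σ : ZMod n → ZMod n there exists k ∈ ZMod n such that ∑_{i ∈ ZMod n} d_C(i + k, σ(i)) ≤ ⌊n²/4⌋. -/
private lemma sum_min_le (n : ℕ) (hn : 1 ≤ n) :
    (∑ v ∈ Finset.range n, min v (n - v)) ≤ n ^ 2 / 4 := by
  rw [Nat.le_div_iff_mul_le (by norm_num)]
  set h := n / 2 with hh
  have h1 : h + 1 ≤ n := by omega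
  have hsplit : (∑ v ∈ Finset.range n, min v (n - v)) =
      (∑ v ∈ Finset.Ico 0 (h+1), min v (n - v)) +
      (∑ v ∈ Finset.Ico (h+1) n, min v (n - v)) := by
    rw [Finset.sum_Ico_consecutive _ (Nat.zero_le _) h1, ← Finset.range_eq_Ico]
  have hA : (∑ v ∈ Finset.Ico 0 (h+1), min v (n - v)) = ∑ v ∈ Finset.range (h+1), v := by
    rw [← Finset.range_eq_Ico]
    refine Finset.sum_congr rfl fun v hv => ?_
    rw [Finset.mem_range] at hv
    have : v ≤ n - v := by omega
    exact min_eq_left this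
  have hB : (∑ v ∈ Finset.Ico (h+1) n, min v (n - v)) =
      ∑ v ∈ Finset.range (n - (h+1)), (n - (h + 1 + v)) := by
    rw [Finset.sum_Ico_eq_sum_range]
    refine Finset.sum_congr rfl fun v hv => ?_
    rw [Finset.mem_range] at hv
    have : n - (h + 1 + v) ≤ h + 1 + v := by omega
    exact min_eq_right this
  set K := n - (h + 1) with hK
  have hB2 : (∑ v ∈ Finset.range K, (n - (h + 1 + v))) = ∑ v ∈ Finset.range K, (K - v) := by
    refine Finset.sum_congr rfl fun v hv => ?_
    rw [Finset.mem_range] at hv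
    omega
  have hB3 : (∑ v ∈ Finset.range K, (K - v)) = (∑ v ∈ Finset.range K, v) + K := by
    rw [← Finset.sum_range_reflect]
    have : ∀ v ∈ Finset.range K, K - (K - 1 - v) = v + 1 := by
      intro v hv; rw [Finset.mem_range] at hv; omega
    rw [Finset.sum_congr rfl this, Finset.sum_add_distrib, Finset.sum_const,
      Finset.card_range, smul_eq_mul, mul_one]
  have gauss1 : (∑ v ∈ Finset.range (h+1), v) * 2 = (h+1) * h := by
    rw [Finset.sum_range_id_mul_two]; simp
  have gaussB : (∑ v ∈ Finset.range K, (K - v)) * 2 = K * (K + 1) := by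
    rw [hB3, add_mul, Finset.sum_range_id_mul_two]
    cases K with
    | zero => simp
    | succ k => simp only [Nat.succ_sub_one]; ring
  rw [hsplit, hA, hB, hB2]
  have e : (∑ v ∈ Finset.range (h+1), v + ∑ v ∈ Finset.range K, (K - v)) * 4
      = (h+1)*h + K*(K+1) + ((h+1)*h + K*(K+1)) := by
    rw [← gauss1, ← gaussB]; ring
  rw [e]
  rcases Nat.even_or_odd n with ⟨m, hm⟩ | ⟨m, hm⟩
  · have hm1 : 1 ≤ m := by omega
    obtain ⟨p, rfl⟩ : ∃ p, m = p + 1 := ⟨m - 1, by omega⟩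
    have hhm : h = p + 1 := by omega
    have hKm : K = p := by omega
    rw [hhm, hKm, hm]
    nlinarith [sq_nonneg p]
  · have hhm : h = m := by omega
    have hKm : K = m := by omega
    rw [hhm, hKm, hm]
    nlinarith [sq_nonneg m]

private lemma zmod_sum_min (n : ℕ) [NeZero n] :
    (∑ j : ZMod n, min j.val (-j).val) = ∑ v ∈ Finset.range n, min v (n - v) := by
  refine Finset.sum_nbij' (fun j => j.val) (fun v => (v : ZMod n)) ?_ ?_ ?_ ?_ ?_
  · intro a _; exact Finset.mem_range.mpr (ZMod.val_lt a)
  · intro a _; exact Finset.mem_univ _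
  · intro a _; exact ZMod.natCast_rightInverse a
  · intro a ha; exact ZMod.val_cast_of_lt (Finset.mem_range.mp ha)
  · intro a _
    rw [ZMod.neg_val]
    by_cases h : a = 0
    · simp [h]
    · rw [if_neg h]

/-- Let `n ≥ 1` and define the cyclic distance on `ZMod n` by
`d_C(a, b) = min((a - b).val, (b - a).val)`. Then for every function
`σ : ZMod n → ZMod n` there exists `k ∈ ZMod n` such that
`∑_i d_C(i + k, σ i) ≤ ⌊n²/4⌋`. -/
theorem exists_rotation_small_total_cyclic_distance (n : ℕ) [NeZero n]
    (hn : 1 ≤ n) (σ : ZMod n → ZMod n) :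
    ∃ k : ZMod n,
      ∑ i : ZMod n, min ((i + k - σ i).val) ((σ i - (i + k)).val) ≤
        n ^ 2 / 4 := by
  have key : ∑ k : ZMod n, ∑ i : ZMod n, min ((i + k - σ i).val) ((σ i - (i + k)).val)
      ≤ ∑ _k : ZMod n, n ^ 2 / 4 := by
    rw [Finset.sum_comm]
    have hinner : ∀ i : ZMod n,
        (∑ k : ZMod n, min ((i + k - σ i).val) ((σ i - (i + k)).val))
        = ∑ j : ZMod n, min j.val (-j).val := by
      intro i
      have := Equiv.sum_comp (Equiv.addRight (i - σ i))
        (fun j : ZMod n => min j.val (-j).val)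
      rw [← this]
      refine Finset.sum_congr rfl fun k _ => ?_
      have e1 : (Equiv.addRight (i - σ i)) k = i + k - σ i := by
        rw [Equiv.coe_addRight]; ring
      rw [e1]
      congr 1
      ring
    calc (∑ i : ZMod n, ∑ k : ZMod n, min ((i + k - σ i).val) ((σ i - (i + k)).val))
        = ∑ _i : ZMod n, ∑ j : ZMod n, min j.val (-j).val :=
          Finset.sum_congr rfl fun i _ => hinner i
      _ ≤ ∑ _i : ZMod n, n ^ 2 / 4 := by
          refine Finset.sum_le_sum fun i _ => ?_
          rw [zmod_sum_min n]
          exact sum_min_le n hn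
  obtain ⟨k, _, hk⟩ := Finset.exists_le_of_sum_le (Finset.univ_nonempty) key
  exact ⟨k, hk⟩
end
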